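/- arXiv:math/0505384 — 7 statements merged into one kernel-verified Lean document; each statement's English description precedes it below -/
import Mathlib

section
/- Let p be a sub-harmonic projection for τ. Then for every x ∈ B(H) and every n ≥ 0 one has τ^n(x(1−p))·p = 0. -/
/-!
For `η = p η`, testing the Kraus sums of `1` and of `p` against `η` gives
`∑ₖ ‖(1 - p) lₖ η‖² = ⟪η, η - τ(p) η⟫ ≤ 0` by sub-harmonicity, so every Kraus operator maps
the range of `p` into itself: `p lₖ p = lₖ p`. Hence `y p = 0` forces `τ(y) p = ∑ₖ lₖ* y p lₖ p = 0`,
and the claim follows by induction on `n` from `x (1 - p) p = 0`.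
-/

open ContinuousLinearMap
open scoped InnerProductSpace

namespace ContinuousLinearMap

variable {ι 𝕜 E : Type*} [RCLike 𝕜] [NormedAddCommGroup E] [InnerProductSpace 𝕜 E]
  [CompleteSpace E]

theorem IsStarProjection.inner_apply_self {q : E →L[𝕜] E} (hq : IsStarProjection q) (w : E) :
    ⟪w, q w⟫_𝕜 = (‖q w‖ : 𝕜) ^ 2 :=
  calc ⟪w, q w⟫_𝕜
    _ = ⟪w, q (q w)⟫_𝕜 := by rw [← mul_apply_eq_comp q q w, hq.isIdempotentElem.eq]
    _ = ⟪q w, q w⟫_𝕜 := (hq.isSelfAdjoint.isSymmetric w (q w)).symm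
    _ = (‖q w‖ : 𝕜) ^ 2 := inner_self_eq_norm_sq_to_K _

theorem hasSum_inner_kraus {l : ι → E →L[𝕜] E} {x : E →L[𝕜] E} {ξ v : E}
    (h : HasSum (fun k => star (l k) (x (l k ξ))) v) :
    HasSum (fun k => ⟪l k ξ, x (l k ξ)⟫_𝕜) ⟪ξ, v⟫_𝕜 := by
  simpa only [star_eq_adjoint, innerSL_apply_apply, adjoint_inner_right] using h.mapL (innerSL 𝕜 ξ)

theorem hasSum_norm_sq_one_sub_apply_kraus {l : ι → E →L[𝕜] E} {p : E →L[𝕜] E}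
    (hp : IsStarProjection p) {ξ v : E}
    (hp_sum : HasSum (fun k => star (l k) (p (l k ξ))) v)
    (hone_sum : HasSum (fun k => star (l k) (l k ξ)) ξ) :
    HasSum (fun k => ‖(1 - p) (l k ξ)‖ ^ 2) (RCLike.re ⟪ξ, ξ - v⟫_𝕜) := by
  have hsum : HasSum (fun k => star (l k) ((1 - p) (l k ξ))) (ξ - v) := by
    simpa only [sub_apply, one_apply_eq_self, map_sub] using hone_sum.sub hp_sum
  have hre := (hasSum_inner_kraus hsum).mapL (RCLike.reCLM (K := 𝕜))
  simpa only [RCLike.reCLM_apply, hp.one_sub.inner_apply_self, ← RCLike.ofReal_pow,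
    RCLike.ofReal_re] using hre

/-- Here `τp` stands for `τ p`, so `hsub` is sub-harmonicity of `p`. -/
theorem mul_kraus_mul_eq_of_isPositive_sub {l : ι → E →L[𝕜] E} {p τp : E →L[𝕜] E}
    (hp : IsStarProjection p) (hτp : ∀ ξ, HasSum (fun k => star (l k) (p (l k ξ))) (τp ξ))
    (hunital : ∀ ξ, HasSum (fun k => star (l k) (l k ξ)) ξ) (hsub : (τp - p).IsPositive)
    (k : ι) : p * l k * p = l k * p := by
  ext ξ
  set η := p ξ
  have hη : p η = η := DFunLike.congr_fun hp.isIdempotentElem.eq ξ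
  have hsum := hasSum_norm_sq_one_sub_apply_kraus hp (hτp η) (hunital η)
  have htotal_nonpos : RCLike.re ⟪η, η - τp η⟫_𝕜 ≤ 0 := by
    have h := hsub.re_inner_nonneg_right η
    rw [sub_apply, hη, ← neg_sub, inner_neg_right, map_neg] at h
    linarith
  have htotal : RCLike.re ⟪η, η - τp η⟫_𝕜 = 0 :=
    le_antisymm htotal_nonpos (hsum.nonneg fun _ => sq_nonneg _)
  rw [htotal, hasSum_zero_iff_of_nonneg fun _ => sq_nonneg _] at hsum
  have hk : (1 - p) (l k η) = 0 := by simpa using congrFun hsum k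
  rw [sub_apply, one_apply_eq_self, sub_eq_zero] at hk
  exact hk.symm

theorem kraus_mul_eq_zero_of_mul_eq_zero {l : ι → E →L[𝕜] E} {p y τy : E →L[𝕜] E}
    (hτy : ∀ ξ, HasSum (fun k => star (l k) (y (l k ξ))) (τy ξ))
    (hinv : ∀ k, p * l k * p = l k * p) (hy : y * p = 0) : τy * p = 0 := by
  ext ξ
  have hterm : ∀ k, star (l k) (y (l k (p ξ))) = 0 := fun k => by
    have hy_lk : y (l k (p ξ)) = 0 :=
      calc y (l k (p ξ)) = (y * (l k * p)) ξ := rfl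
        _ = (y * (p * l k * p)) ξ := by rw [hinv k]
        _ = (y * p * (l k * p)) ξ := by simp only [mul_assoc]
        _ = 0 := by rw [hy, zero_mul, zero_apply]
    rw [hy_lk, map_zero]
  have h := hτy (p ξ)
  simp only [hterm] at h
  exact h.unique hasSum_zero

end ContinuousLinearMap

theorem subharmonic_projection_iterate_annihilate_general
    {H : Type*} [NormedAddCommGroup H] [InnerProductSpace ℂ H]
    [CompleteSpace H]
    (τ : (H →L[ℂ] H) → (H →L[ℂ] H)) (l : ℕ → H →L[ℂ] H)
    (hKraus : ∀ (x : H →L[ℂ] H) (ξ : H),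
      HasSum (fun k => star (l k) (x ((l k) ξ))) (τ x ξ))
    (hUnital : ∀ ξ : H, HasSum (fun k => star (l k) ((l k) ξ)) ξ)
    (p : H →L[ℂ] H) (hp_idem : p * p = p) (hp_sa : IsSelfAdjoint p)
    (hp_sub : (τ p - p).IsPositive) :
    ∀ (x : H →L[ℂ] H) (n : ℕ), τ^[n] (x * (1 - p)) * p = 0 := by
  have hp : IsStarProjection p := ⟨hp_idem, hp_sa⟩
  have hinv := mul_kraus_mul_eq_of_isPositive_sub hp (hKraus p) hUnital hp_sub
  intro x n
  induction n with
  | zero => rw [Function.iterate_zero_apply, mul_assoc, hp.one_sub_mul_self, mul_zero]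
  | succ n ih =>
    rw [Function.iterate_succ_apply']
    exact kraus_mul_eq_zero_of_mul_eq_zero (hKraus _) hinv ih

theorem subharmonic_projection_iterate_annihilate
    {H : Type*} [NormedAddCommGroup H] [InnerProductSpace ℂ H]
    [CompleteSpace H] [TopologicalSpace.SeparableSpace H]
    (τ : (H →L[ℂ] H) → (H →L[ℂ] H)) (l : ℕ → H →L[ℂ] H)
    (hKraus : ∀ (x : H →L[ℂ] H) (ξ : H),
      HasSum (fun k => star (l k) (x ((l k) ξ))) (τ x ξ))
    (hUnital : ∀ ξ : H, HasSum (fun k => star (l k) ((l k) ξ)) ξ)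
    (p : H →L[ℂ] H) (hp_idem : p * p = p) (hp_sa : IsSelfAdjoint p)
    (hp_sub : (τ p - p).IsPositive) :
    ∀ (x : H →L[ℂ] H) (n : ℕ), τ^[n] (x * (1 - p)) * p = 0 :=
  subharmonic_projection_iterate_annihilate_general τ l hKraus hUnital p hp_idem hp_sa hp_sub
end

section
/- Let x ∈ B(H) be a non-negative operator (x ≥ 0) with τ(x) = x, and let q be the orthogonal projection onto the closure of the range of x. Then 1−q is sub-harmonic for τ, i.e. τ(q) ≤ q. -/
/-! Because `x` and `q` are self-adjoint, `ker q = (range q)ᗮ = (range x)ᗮ = ker x`. Writing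
`x = b⋆b`, a vector `ξ ∈ ker x` gives `∑ ‖b lₖ ξ‖² = ⟪τ x ξ, ξ⟫ = ⟪x ξ, ξ⟫ = 0`, so every Kraus
operator maps `ker q` into itself, i.e. `q lₖ = q lₖ q`. Hence
`⟪τ q ξ, ξ⟫ = ∑ ‖q lₖ q ξ‖² ≤ ∑ ‖lₖ q ξ‖² = ‖q ξ‖² = ⟪q ξ, ξ⟫`. -/

section

open ContinuousLinearMap ComplexOrder
open scoped InnerProductSpace

variable {𝕜 E : Type*} [RCLike 𝕜] [NormedAddCommGroup E] [InnerProductSpace 𝕜 E] [CompleteSpace E]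

theorem ker_eq_ker_of_range_eq_closure_range {p T : E →L[𝕜] E} (hp : IsStarNormal p)
    (hT : IsStarNormal T)
    (h : LinearMap.range (p : E →ₗ[𝕜] E) = (LinearMap.range (T : E →ₗ[𝕜] E)).topologicalClosure) :
    LinearMap.ker (p : E →ₗ[𝕜] E) = LinearMap.ker (T : E →ₗ[𝕜] E) := by
  rw [← hp.orthogonal_range, ← hT.orthogonal_range, h, Submodule.orthogonal_closure]

theorem inner_star_mul_self_apply (b : E →L[𝕜] E) (v : E) :
    ⟪(star b * b) v, v⟫_𝕜 = ((‖b v‖ ^ 2 : ℝ) : 𝕜) := by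
  rw [star_eq_adjoint, mul_apply_eq_comp, adjoint_inner_left, inner_self_eq_norm_sq_to_K]
  norm_cast

theorem IsStarProjection.inner_apply_self {p : E →L[𝕜] E} (hp : IsStarProjection p) (v : E) :
    ⟪p v, v⟫_𝕜 = ((‖p v‖ ^ 2 : ℝ) : 𝕜) := by
  have hpp : p (p v) = p v := congrArg (· v) hp.isIdempotentElem.eq
  calc ⟪p v, v⟫_𝕜 = ⟪p (p v), v⟫_𝕜 := by rw [hpp]
    _ = ⟪p v, p v⟫_𝕜 := hp.isSelfAdjoint.isSymmetric _ _
    _ = ((‖p v‖ ^ 2 : ℝ) : 𝕜) := by rw [inner_self_eq_norm_sq_to_K]; norm_cast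

theorem IsStarProjection.norm_apply_le {p : E →L[𝕜] E} (hp : IsStarProjection p) (v : E) :
    ‖p v‖ ≤ ‖v‖ := by
  simpa using p.le_of_opNorm_le (hp.norm_le p) v

theorem hasSum_inner_of_hasSum_star_apply {ι : Type*} {l : ι → E →L[𝕜] E} {v : ι → E} {w : E}
    (h : HasSum (fun k => star (l k) (v k)) w) (ξ : E) :
    HasSum (fun k => ⟪v k, l k ξ⟫_𝕜) ⟪w, ξ⟫_𝕜 := by
  simpa only [innerSLFlip_apply_apply, star_eq_adjoint, adjoint_inner_left]
    using (innerSLFlip 𝕜 ξ).hasSum h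

theorem ContinuousLinearMap.isPositive_of_inner_nonneg {E : Type*} [NormedAddCommGroup E]
    [InnerProductSpace ℂ E] {T : E →L[ℂ] E} (h : ∀ v, 0 ≤ ⟪T v, v⟫_ℂ) : T.IsPositive :=
  (isPositive_iff_complex T).mpr fun v => by
    obtain ⟨hre, him⟩ := Complex.nonneg_iff.mp (h v)
    exact ⟨Complex.ext rfl (by simpa using him), hre⟩

section Kraus

variable {H ι : Type*} [NormedAddCommGroup H] [InnerProductSpace ℂ H] [CompleteSpace H]
  {τ : (H →L[ℂ] H) → (H →L[ℂ] H)} {l : ι → H →L[ℂ] H}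

theorem hasSum_inner_kraus
    (hKraus : ∀ (a : H →L[ℂ] H) (ξ : H), HasSum (fun k => star (l k) (a (l k ξ))) (τ a ξ))
    (a : H →L[ℂ] H) (ξ : H) :
    HasSum (fun k => ⟪a (l k ξ), l k ξ⟫_ℂ) ⟪τ a ξ, ξ⟫_ℂ :=
  hasSum_inner_of_hasSum_star_apply (hKraus a ξ) ξ

theorem hasSum_norm_sq_of_unital (hUnital : ∀ ξ : H, HasSum (fun k => star (l k) (l k ξ)) ξ)
    (ξ : H) : HasSum (fun k => ‖l k ξ‖ ^ 2) (‖ξ‖ ^ 2) := by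
  have h := hasSum_inner_of_hasSum_star_apply (hUnital ξ) ξ
  simp only [inner_self_eq_norm_sq_to_K] at h
  exact_mod_cast h

theorem apply_kraus_eq_zero_of_isPositive_of_fixed
    (hKraus : ∀ (a : H →L[ℂ] H) (ξ : H), HasSum (fun k => star (l k) (a (l k ξ))) (τ a ξ))
    {x : H →L[ℂ] H} (hx : x.IsPositive) (hinv : τ x = x) {ξ : H} (hξ : x ξ = 0) (k : ι) :
    x (l k ξ) = 0 := by
  obtain ⟨b, rfl⟩ := CStarAlgebra.nonneg_iff_eq_star_mul_self.mp ((nonneg_iff_isPositive x).mpr hx)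
  have hsum : HasSum (fun k => ‖b (l k ξ)‖ ^ 2) 0 := by
    have h := hasSum_inner_kraus hKraus (star b * b) ξ
    simp only [hinv, hξ, inner_zero_left, inner_star_mul_self_apply,
      RCLike.ofReal_eq_complex_ofReal] at h
    rwa [← Complex.ofReal_zero, Complex.hasSum_ofReal] at h
  have hbk : b (l k ξ) = 0 := by
    simpa using congrFun ((hasSum_zero_iff_of_nonneg fun _ => by positivity).mp hsum) k
  rw [mul_apply_eq_comp, hbk, map_zero]

theorem kraus_le_of_ker_invariant
    (hKraus : ∀ (a : H →L[ℂ] H) (ξ : H), HasSum (fun k => star (l k) (a (l k ξ))) (τ a ξ))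
    (hUnital : ∀ ξ : H, HasSum (fun k => star (l k) (l k ξ)) ξ)
    {q : H →L[ℂ] H} (hq : IsStarProjection q) (hker : ∀ k ξ, q ξ = 0 → q (l k ξ) = 0) :
    τ q ≤ q := by
  have hq_comp : ∀ k ξ, q (l k ξ) = q (l k (q ξ)) := fun k ξ => by
    have hpp : q (q ξ) = q ξ := congrArg (· ξ) hq.isIdempotentElem.eq
    have h := hker k (ξ - q ξ) (by rw [map_sub, hpp, sub_self])
    rwa [map_sub, map_sub, sub_eq_zero] at h
  refine (le_def _ _).mpr (isPositive_of_inner_nonneg fun ξ => ?_)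
  have hτ : HasSum (fun k => ((‖q (l k (q ξ))‖ ^ 2 : ℝ) : ℂ)) ⟪τ q ξ, ξ⟫_ℂ := by
    convert hasSum_inner_kraus hKraus q ξ using 2 with k
    rw [hq.inner_apply_self, hq_comp k ξ, RCLike.ofReal_eq_complex_ofReal]
  obtain ⟨r, hr⟩ : Summable fun k => ‖q (l k (q ξ))‖ ^ 2 :=
    Complex.summable_ofReal.mp hτ.summable
  have hr_eq : ⟪τ q ξ, ξ⟫_ℂ = (r : ℂ) := hτ.unique (Complex.hasSum_ofReal.mpr hr)
  have hr_le : r ≤ ‖q ξ‖ ^ 2 :=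
    hasSum_le (fun k => by gcongr; exact hq.norm_apply_le _) hr
      (hasSum_norm_sq_of_unital hUnital (q ξ))
  rw [sub_apply, inner_sub_left, hq.inner_apply_self, hr_eq, RCLike.ofReal_eq_complex_ofReal,
    ← Complex.ofReal_sub]
  exact Complex.zero_le_real.mpr (sub_nonneg.mpr hr_le)

end Kraus

end

theorem range_projection_of_invariant_is_superharmonic_general
    {H : Type*} [NormedAddCommGroup H] [InnerProductSpace ℂ H]
    [CompleteSpace H]
    (τ : (H →L[ℂ] H) → (H →L[ℂ] H)) (l : ℕ → H →L[ℂ] H)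
    (hKraus : ∀ (x : H →L[ℂ] H) (ξ : H),
      HasSum (fun k => star (l k) (x ((l k) ξ))) (τ x ξ))
    (hUnital : ∀ ξ : H, HasSum (fun k => star (l k) ((l k) ξ)) ξ)
    (x : H →L[ℂ] H) (hx_pos : x.IsPositive) (hx_inv : τ x = x)
    (q : H →L[ℂ] H) (hq_idem : q * q = q) (hq_sa : IsSelfAdjoint q)
    (hq_range : LinearMap.range (q : H →ₗ[ℂ] H)
      = (LinearMap.range (x : H →ₗ[ℂ] H)).topologicalClosure) :
    (q - τ q).IsPositive := by
  have hker : LinearMap.ker (q : H →ₗ[ℂ] H) = LinearMap.ker (x : H →ₗ[ℂ] H) :=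
    ker_eq_ker_of_range_eq_closure_range hq_sa.isStarNormal hx_pos.isSelfAdjoint.isStarNormal
      hq_range
  have hker_apply : ∀ ξ, q ξ = 0 ↔ x ξ = 0 := fun ξ => SetLike.ext_iff.mp hker ξ
  refine (ContinuousLinearMap.le_def _ _).mp (kraus_le_of_ker_invariant hKraus hUnital ⟨hq_idem, hq_sa⟩ ?_)
  intro k ξ hξ
  exact (hker_apply _).mpr
    (apply_kraus_eq_zero_of_isPositive_of_fixed hKraus hx_pos hx_inv ((hker_apply ξ).mp hξ) k)

theorem range_projection_of_invariant_is_superharmonic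
    {H : Type*} [NormedAddCommGroup H] [InnerProductSpace ℂ H]
    [CompleteSpace H] [TopologicalSpace.SeparableSpace H]
    (τ : (H →L[ℂ] H) → (H →L[ℂ] H)) (l : ℕ → H →L[ℂ] H)
    (hKraus : ∀ (x : H →L[ℂ] H) (ξ : H),
      HasSum (fun k => star (l k) (x ((l k) ξ))) (τ x ξ))
    (hUnital : ∀ ξ : H, HasSum (fun k => star (l k) ((l k) ξ)) ξ)
    (x : H →L[ℂ] H) (hx_pos : x.IsPositive) (hx_inv : τ x = x)
    (q : H →L[ℂ] H) (hq_idem : q * q = q) (hq_sa : IsSelfAdjoint q)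
    (hq_range : LinearMap.range (q : H →ₗ[ℂ] H)
      = (LinearMap.range (x : H →ₗ[ℂ] H)).topologicalClosure) :
    (q - τ q).IsPositive :=
  range_projection_of_invariant_is_superharmonic_general τ l hKraus hUnital x hx_pos hx_inv q
    hq_idem hq_sa hq_range
end

section
/- Let p be a sub-harmonic projection for τ and let y be the strong limit of τ^n(p). If there exists λ > 0 such that y ≥ λ·1, then y = 1. -/
/-!
The iterates `τⁿ(p)` increase to `y`, and since `τ` is normal the limit is a fixed point, so
`z = 1 - y` is a positive fixed point of `τ`. From `p ≤ y ≤ 1` the operator `z` lies under the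
projection `1 - p`, and `y ≥ λ` then gives `z ≤ (1 - λ)(1 - p)`. Applying `τⁿ` (unital, positive)
yields `z ≤ (1 - λ)(1 - τⁿ(p))`, and in the limit `z ≤ (1 - λ) z`, which forces `z = 0`.
-/

open Filter Topology ComplexOrder InnerProductSpace

namespace ContinuousLinearMap

variable {H : Type*} [NormedAddCommGroup H] [InnerProductSpace ℂ H]

/-- In `ComplexOrder`, `0 ≤ w` means that `w` is real and nonnegative, so symmetry of `T` is
automatic. -/
theorem isPositive_iff_forall_inner_nonneg (T : H →L[ℂ] H) :
    T.IsPositive ↔ ∀ x, 0 ≤ ⟪x, T x⟫_ℂ := by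
  refine ⟨fun hT => hT.inner_nonneg_right, fun h => ?_⟩
  have hreal : ∀ x, (starRingEnd ℂ) ⟪x, T x⟫_ℂ = ⟪x, T x⟫_ℂ := fun x =>
    Complex.conj_eq_iff_im.2 (Complex.nonneg_iff.1 (h x)).2.symm
  refine T.isPositive_iff.2
    ⟨(LinearMap.isSymmetric_iff_inner_map_self_real _).2 fun x => ?_, fun x => ?_⟩
  · rw [coe_coe, inner_conj_symm, ← hreal, inner_conj_symm]
  · rw [← inner_conj_symm, hreal]
    exact h x

theorem le_iff_forall_inner_le {a b : H →L[ℂ] H} :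
    a ≤ b ↔ ∀ x, ⟪x, a x⟫_ℂ ≤ ⟪x, b x⟫_ℂ := by
  simp only [le_def, isPositive_iff_forall_inner_nonneg, sub_apply, inner_sub_right, sub_nonneg]

section StrongLimit

variable {ι : Type*} {L : Filter ι} [L.NeBot] {a : ι → H →L[ℂ] H} {a₀ b : H →L[ℂ] H}

theorem ge_of_tendsto_apply (ha : ∀ ξ, Tendsto (fun i => a i ξ) L (𝓝 (a₀ ξ)))
    (h : ∀ᶠ i in L, b ≤ a i) : b ≤ a₀ :=
  le_iff_forall_inner_le.2 fun ξ => ge_of_tendsto (tendsto_const_nhds.inner (ha ξ))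
    (h.mono fun _ hi => le_iff_forall_inner_le.1 hi ξ)

theorem le_of_tendsto_apply (ha : ∀ ξ, Tendsto (fun i => a i ξ) L (𝓝 (a₀ ξ)))
    (h : ∀ᶠ i in L, a i ≤ b) : a₀ ≤ b :=
  le_iff_forall_inner_le.2 fun ξ => le_of_tendsto (tendsto_const_nhds.inner (ha ξ))
    (h.mono fun _ hi => le_iff_forall_inner_le.1 hi ξ)

end StrongLimit

end ContinuousLinearMap

open ContinuousLinearMap

theorem Monotone.iterate_le_of_tendsto_apply {H : Type*} [NormedAddCommGroup H]
    [InnerProductSpace ℂ H] {τ : (H →L[ℂ] H) → (H →L[ℂ] H)} (hτ : Monotone τ)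
    {p y : H →L[ℂ] H} (hp : p ≤ τ p)
    (hy : ∀ ξ, Tendsto (fun n => (τ^[n] p) ξ) atTop (𝓝 (y ξ))) (n : ℕ) : τ^[n] p ≤ y :=
  ge_of_tendsto_apply hy <|
    eventually_atTop.2 ⟨n, fun _ hm => hτ.monotone_iterate_of_le_map hp hm⟩

theorem IsStarProjection.le_smul_of_le_smul_one {A : Type*} [CStarAlgebra A] [PartialOrder A]
    [StarOrderedRing A] {a e : A} {c : ℝ} (he : IsStarProjection e) (ha : 0 ≤ a) (hae : a ≤ e)
    (hac : a ≤ c • 1) : a ≤ c • e :=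
  calc a = e * a * e := (he.conjugate_of_nonneg_of_le ha hae).symm
    _ ≤ e * (c • 1) * e := he.isSelfAdjoint.conjugate_le_conjugate hac
    _ = c • e := by rw [mul_smul_comm, mul_one, smul_mul_assoc, he.isIdempotentElem.eq]

theorem eq_zero_of_nonneg_of_le_smul_self {M : Type*} [AddCommGroup M] [PartialOrder M]
    [IsOrderedAddMonoid M] [Module ℝ M] [PosSMulMono ℝ M] {z : M} {c : ℝ} (hc : c < 1)
    (hz : 0 ≤ z) (h : z ≤ c • z) : z = 0 := by
  have hc' : 0 < 1 - c := sub_pos.2 hc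
  have h' : (1 - c) • z ≤ 0 := by rwa [sub_smul, one_smul, sub_nonpos]
  refine le_antisymm ?_ hz
  simpa [smul_smul, hc'.ne'] using smul_nonpos_of_nonneg_of_nonpos (inv_nonneg.2 hc'.le) h'

def IsKrausMap {H : Type*} [NormedAddCommGroup H] [InnerProductSpace ℂ H] [CompleteSpace H]
    (τ : (H →L[ℂ] H) → (H →L[ℂ] H)) (l : ℕ → H →L[ℂ] H) : Prop :=
  ∀ x ξ, HasSum (fun k => star (l k) (x (l k ξ))) (τ x ξ)

namespace IsKrausMap

variable {H : Type*} [NormedAddCommGroup H] [InnerProductSpace ℂ H] [CompleteSpace H]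
  {τ : (H →L[ℂ] H) → (H →L[ℂ] H)} {l : ℕ → H →L[ℂ] H}

theorem hasSum_inner (hτ : IsKrausMap τ l) (x : H →L[ℂ] H) (ξ : H) :
    HasSum (fun k => ⟪l k ξ, x (l k ξ)⟫_ℂ) ⟪ξ, τ x ξ⟫_ℂ := by
  simpa only [innerSL_apply_apply, star_eq_adjoint, adjoint_inner_right] using
    (innerSL ℂ ξ).hasSum (hτ x ξ)

theorem map_sub (hτ : IsKrausMap τ l) (a b : H →L[ℂ] H) : τ (a - b) = τ a - τ b := by
  ext ξ
  exact (hτ _ ξ).unique (by simpa using (hτ a ξ).sub (hτ b ξ))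

theorem map_smul (hτ : IsKrausMap τ l) (c : ℂ) (a : H →L[ℂ] H) : τ (c • a) = c • τ a := by
  ext ξ
  exact (hτ _ ξ).unique (by simpa using (hτ a ξ).const_smul c)

theorem map_one (hτ : IsKrausMap τ l) (hl : ∀ ξ, HasSum (fun k => star (l k) (l k ξ)) ξ) :
    τ 1 = 1 := by
  ext ξ
  exact (hτ 1 ξ).unique (hl ξ)

theorem monotone (hτ : IsKrausMap τ l) : Monotone τ := fun a b hab =>
  le_iff_forall_inner_le.2 fun ξ =>
    hasSum_le (fun k => le_iff_forall_inner_le.1 hab (l k ξ))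
      (hτ.hasSum_inner a ξ) (hτ.hasSum_inner b ξ)

/-- Normality of `τ`, in the form of a Fatou lemma: every finite part of the Kraus sum for
`τ a₀` is a limit of the corresponding finite parts for `τ (a i)`. -/
theorem le_of_tendsto_apply (hτ : IsKrausMap τ l) {ι : Type*} {L : Filter ι} [L.NeBot]
    {a : ι → H →L[ℂ] H} {a₀ b : H →L[ℂ] H} (ha : ∀ ξ, Tendsto (fun i => a i ξ) L (𝓝 (a₀ ξ)))
    (ha_nonneg : ∀ᶠ i in L, 0 ≤ a i) (h : ∀ᶠ i in L, τ (a i) ≤ b) : τ a₀ ≤ b := by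
  refine le_iff_forall_inner_le.2 fun ξ =>
    hasSum_le_of_sum_le (hτ.hasSum_inner a₀ ξ) fun s => ?_
  refine le_of_tendsto (tendsto_finsetSum s fun k _ => tendsto_const_nhds.inner (ha (l k ξ))) ?_
  filter_upwards [ha_nonneg, h] with i hi hib
  calc ∑ k ∈ s, ⟪l k ξ, a i (l k ξ)⟫_ℂ ≤ ⟪ξ, τ (a i) ξ⟫_ℂ :=
        sum_le_hasSum s (fun k _ => ((nonneg_iff_isPositive _).1 hi).inner_nonneg_right _)
          (hτ.hasSum_inner (a i) ξ)
    _ ≤ ⟪ξ, b ξ⟫_ℂ := le_iff_forall_inner_le.1 hib ξ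

theorem map_eq_of_tendsto_iterate (hτ : IsKrausMap τ l) {p y : H →L[ℂ] H} (hp₀ : 0 ≤ p)
    (hp : p ≤ τ p) (hy : ∀ ξ, Tendsto (fun n => (τ^[n] p) ξ) atTop (𝓝 (y ξ))) : τ y = y := by
  have hle := hτ.monotone.iterate_le_of_tendsto_apply hp hy
  have hy_succ : ∀ ξ, Tendsto (fun n => (τ (τ^[n] p)) ξ) atTop (𝓝 (y ξ)) := fun ξ => by
    simpa only [Function.comp_def, Function.iterate_succ_apply'] using
      (hy ξ).comp (tendsto_add_atTop_nat 1)
  refine le_antisymm ?_ (ContinuousLinearMap.le_of_tendsto_apply hy_succ (.of_forall fun n => hτ.monotone (hle n)))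
  refine hτ.le_of_tendsto_apply hy (.of_forall fun n => ?_) (.of_forall fun n => ?_)
  · exact hp₀.trans (hτ.monotone.monotone_iterate_of_le_map hp n.zero_le)
  · simpa only [Function.iterate_succ_apply'] using hle (n + 1)

theorem le_smul_one_sub_iterate (hτ : IsKrausMap τ l)
    (hl : ∀ ξ, HasSum (fun k => star (l k) (l k ξ)) ξ) {z p : H →L[ℂ] H} {c : ℝ}
    (hz : τ z = z) (h : z ≤ c • (1 - p)) (n : ℕ) : z ≤ c • (1 - τ^[n] p) := by
  induction n with
  | zero => exact h
  | succ n ih =>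
    calc z = τ z := hz.symm
      _ ≤ τ (c • (1 - τ^[n] p)) := hτ.monotone ih
      _ = c • (1 - τ^[n + 1] p) := by
        rw [← Complex.coe_smul, ← Complex.coe_smul, hτ.map_smul, hτ.map_sub, hτ.map_one hl,
          Function.iterate_succ_apply']

end IsKrausMap

theorem strong_limit_bounded_below_eq_one_general
    {H : Type*} [NormedAddCommGroup H] [InnerProductSpace ℂ H]
    [CompleteSpace H]
    (τ : (H →L[ℂ] H) → (H →L[ℂ] H)) (l : ℕ → H →L[ℂ] H)
    (hKraus : ∀ (x : H →L[ℂ] H) (ξ : H),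
      HasSum (fun k => star (l k) (x ((l k) ξ))) (τ x ξ))
    (hUnital : ∀ ξ : H, HasSum (fun k => star (l k) ((l k) ξ)) ξ)
    (p : H →L[ℂ] H) (hp_idem : p * p = p) (hp_sa : IsSelfAdjoint p)
    (hp_sub : (τ p - p).IsPositive)
    (y : H →L[ℂ] H) (hy_le : (1 - y).IsPositive)
    (hy_lim : ∀ ξ : H, Filter.Tendsto (fun n => (τ^[n] p) ξ)
      Filter.atTop (nhds (y ξ)))
    (hbound : ∃ lam : ℝ, 0 < lam ∧ (y - (lam : ℂ) • 1).IsPositive) :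
    y = 1 := by
  obtain ⟨lam, hlam, hy_lam⟩ := hbound
  have hτ : IsKrausMap τ l := hKraus
  have hp : IsStarProjection p := ⟨hp_idem, hp_sa⟩
  have hp_le : p ≤ τ p := hp_sub
  have hτy : τ y = y := hτ.map_eq_of_tendsto_iterate hp.nonneg hp_le hy_lim
  have hz_nonneg : 0 ≤ 1 - y := (nonneg_iff_isPositive _).2 hy_le
  have hz_le_one_sub : 1 - y ≤ 1 - p :=
    sub_le_sub_left (hτ.monotone.iterate_le_of_tendsto_apply hp_le hy_lim 0) 1
  have hz_le_smul_one : 1 - y ≤ (1 - lam) • 1 := by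
    rw [sub_smul, one_smul]
    exact sub_le_sub_left (by simpa [ContinuousLinearMap.le_def, Complex.coe_smul] using hy_lam) 1
  have hz_le_iterate := hτ.le_smul_one_sub_iterate hUnital
    (by rw [hτ.map_sub, hτ.map_one hUnital, hτy])
    (hp.one_sub.le_smul_of_le_smul_one hz_nonneg hz_le_one_sub hz_le_smul_one)
  have hz_le : 1 - y ≤ (1 - lam) • (1 - y) :=
    ge_of_tendsto_apply (fun ξ => by simpa using ((hy_lim ξ).const_sub ξ).const_smul (1 - lam))
      (.of_forall hz_le_iterate)
  exact (sub_eq_zero.1 (eq_zero_of_nonneg_of_le_smul_self (by linarith) hz_nonneg hz_le)).symm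

theorem strong_limit_bounded_below_eq_one
    {H : Type*} [NormedAddCommGroup H] [InnerProductSpace ℂ H]
    [CompleteSpace H] [TopologicalSpace.SeparableSpace H]
    (τ : (H →L[ℂ] H) → (H →L[ℂ] H)) (l : ℕ → H →L[ℂ] H)
    (hKraus : ∀ (x : H →L[ℂ] H) (ξ : H),
      HasSum (fun k => star (l k) (x ((l k) ξ))) (τ x ξ))
    (hUnital : ∀ ξ : H, HasSum (fun k => star (l k) ((l k) ξ)) ξ)
    (p : H →L[ℂ] H) (hp_idem : p * p = p) (hp_sa : IsSelfAdjoint p)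
    (hp_sub : (τ p - p).IsPositive)
    (y : H →L[ℂ] H) (hy_pos : y.IsPositive) (hy_le : (1 - y).IsPositive)
    (hy_lim : ∀ ξ : H, Filter.Tendsto (fun n => (τ^[n] p) ξ)
      Filter.atTop (nhds (y ξ)))
    (hbound : ∃ lam : ℝ, 0 < lam ∧ (y - (lam : ℂ) • 1).IsPositive) :
    y = 1 :=
  strong_limit_bounded_below_eq_one_general τ l hKraus hUnital p hp_idem hp_sa hp_sub y hy_le hy_lim
    hbound
end

section
/- Let p be a sub-harmonic projection for τ and let y be the strong limit of τ^n(p). Then for any z ∈ B(H), y·z = 0 if and only if p·z = 0 and p·l_{i_1}·l_{i_2}·⋯·l_{i_n}·z = 0 for every n ≥ 1 and all indices i_1, …, i_n ∈ ℕ. -/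
/-!
For positive `x` the Kraus form gives `⟪η, τ x η⟫ = ∑ₖ ⟪lₖ η, x (lₖ η)⟫`, a sum of nonnegative
terms, so `τ x * z = 0` iff `x * lₖ * z = 0` for every `k`; by induction `τⁿ p * z = 0` iff
`p * w * z = 0` for every word `w` of length `n` in the `lₖ`. Subharmonicity makes `τⁿ p` an
increasing sequence of positive operators, so `y * z = 0` iff `τⁿ p * z = 0` for all `n`: one
direction passes to the strong limit, the other uses `0 ≤ ⟪η, τⁿ p η⟫ ≤ ⟪η, y η⟫`.
-/

open ContinuousLinearMap Filter Topology
open scoped ComplexOrder InnerProductSpace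

section

variable {H : Type*} [NormedAddCommGroup H] [InnerProductSpace ℂ H]

namespace ContinuousLinearMap

theorem isPositive_of_inner_nonneg_s8 {a : H →L[ℂ] H} (h : ∀ ξ, 0 ≤ ⟪ξ, a ξ⟫_ℂ) :
    a.IsPositive := by
  rw [isPositive_iff_complex]
  intro ξ
  have hξ := RCLike.nonneg_iff.mp (h ξ)
  rw [← inner_conj_symm] at hξ
  simp only [RCLike.conj_re, RCLike.conj_im, neg_eq_zero] at hξ
  exact ⟨Complex.ext (by simp) (by simpa using hξ.2.symm), hξ.1⟩

variable [CompleteSpace H]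

theorem IsPositive.apply_eq_zero_of_inner_eq_zero {a : H →L[ℂ] H} (ha : a.IsPositive) {η : H}
    (h : ⟪η, a η⟫_ℂ = 0) : a η = 0 := by
  obtain ⟨b, rfl⟩ :=
    CStarAlgebra.nonneg_iff_eq_star_mul_self.mp ((nonneg_iff_isPositive a).mpr ha)
  rw [mul_apply_eq_comp, star_eq_adjoint, adjoint_inner_right, inner_self_eq_zero] at h
  simp [h]

theorem mul_eq_zero_iff_of_monotone_tendsto {a : ℕ → H →L[ℂ] H} (ha : ∀ n, (a n).IsPositive)
    (ha_mono : Monotone a) {y : H →L[ℂ] H} (hy : ∀ ξ, Tendsto (fun n => a n ξ) atTop (𝓝 (y ξ)))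
    (z : H →L[ℂ] H) : y * z = 0 ↔ ∀ n, a n * z = 0 := by
  simp only [ContinuousLinearMap.ext_iff, mul_apply_eq_comp, zero_apply]
  constructor
  · intro hyz n ξ
    refine (ha n).apply_eq_zero_of_inner_eq_zero (le_antisymm ?_ ((ha n).inner_nonneg_right _))
    have h_lim : Tendsto (fun m => ⟪z ξ, a m (z ξ)⟫_ℂ) atTop (𝓝 0) := by
      simpa [hyz] using tendsto_const_nhds.inner (hy (z ξ))
    refine ge_of_tendsto h_lim (eventually_atTop.mpr ⟨n, fun m hm => ?_⟩)
    have h_le := ((ContinuousLinearMap.le_def _ _).mp (ha_mono hm)).inner_nonneg_right (z ξ)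
    simpa [inner_sub_right] using h_le
  · intro h ξ
    exact tendsto_nhds_unique (hy (z ξ)) (by simp [h])

end ContinuousLinearMap

variable [CompleteSpace H]

def IsKrausRepresentation {ι : Type*} (τ : (H →L[ℂ] H) → (H →L[ℂ] H)) (l : ι → H →L[ℂ] H) :
    Prop :=
  ∀ x ξ, HasSum (fun k => star (l k) (x (l k ξ))) (τ x ξ)

namespace IsKrausRepresentation

variable {ι : Type*} {τ : (H →L[ℂ] H) → (H →L[ℂ] H)} {l : ι → H →L[ℂ] H}
  (hτ : IsKrausRepresentation τ l)
include hτ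

theorem hasSum_inner (x : H →L[ℂ] H) (ξ : H) :
    HasSum (fun k => ⟪l k ξ, x (l k ξ)⟫_ℂ) ⟪ξ, τ x ξ⟫_ℂ := by
  simpa [star_eq_adjoint, adjoint_inner_right] using (hτ x ξ).mapL (innerSL ℂ ξ)

theorem map_sub (a b : H →L[ℂ] H) : τ (a - b) = τ a - τ b := by
  ext ξ
  exact (hτ (a - b) ξ).unique (by simpa using (hτ a ξ).sub (hτ b ξ))

theorem isPositive_map {x : H →L[ℂ] H} (hx : x.IsPositive) : (τ x).IsPositive :=
  isPositive_of_inner_nonneg_s8 fun ξ =>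
    (hτ.hasSum_inner x ξ).nonneg fun _ => hx.inner_nonneg_right _

theorem monotone : Monotone τ := fun a b hab => by
  rw [ContinuousLinearMap.le_def, ← hτ.map_sub]
  exact hτ.isPositive_map hab

theorem mul_eq_zero_iff {x : H →L[ℂ] H} (hx : x.IsPositive) (z : H →L[ℂ] H) :
    τ x * z = 0 ↔ ∀ k, x * (l k * z) = 0 := by
  simp only [ContinuousLinearMap.ext_iff, mul_apply_eq_comp, zero_apply]
  constructor
  · intro h k ξ
    have h_terms := (hasSum_zero_iff_of_nonneg fun j => hx.inner_nonneg_right (l j (z ξ))).mp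
      (by simpa [h] using hτ.hasSum_inner x (z ξ))
    exact hx.apply_eq_zero_of_inner_eq_zero (congrFun h_terms k)
  · intro h ξ
    exact (hτ x (z ξ)).unique (by simp [h])

theorem iterate_mul_eq_zero_iff {x : H →L[ℂ] H} (hx : x.IsPositive) (n : ℕ) (z : H →L[ℂ] H) :
    τ^[n] x * z = 0 ↔ ∀ i : Fin n → ι, x * (List.ofFn fun j => l (i j)).prod * z = 0 := by
  induction n generalizing x z with
  | zero => simp
  | succ n ih =>
    rw [Function.iterate_succ_apply, ih (hτ.isPositive_map hx), Fin.forall_fin_succ_pi]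
    simp only [hτ.mul_eq_zero_iff hx, List.ofFn_succ, Fin.cons_zero, Fin.cons_succ,
      List.prod_cons, mul_assoc]
    exact forall_comm

end IsKrausRepresentation

end

theorem strong_limit_annihilates_iff_words_annihilate_general
    {H : Type*} [NormedAddCommGroup H] [InnerProductSpace ℂ H]
    [CompleteSpace H]
    (τ : (H →L[ℂ] H) → (H →L[ℂ] H)) (l : ℕ → H →L[ℂ] H)
    (hKraus : ∀ (x : H →L[ℂ] H) (ξ : H),
      HasSum (fun k => star (l k) (x ((l k) ξ))) (τ x ξ))
    (p : H →L[ℂ] H) (hp_idem : p * p = p) (hp_sa : IsSelfAdjoint p)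
    (hp_sub : (τ p - p).IsPositive)
    (y : H →L[ℂ] H)
    (hy_lim : ∀ ξ : H, Filter.Tendsto (fun n => (τ^[n] p) ξ)
      Filter.atTop (nhds (y ξ))) :
    ∀ z : H →L[ℂ] H, y * z = 0 ↔
      (p * z = 0 ∧ ∀ (n : ℕ) (i : Fin (n + 1) → ℕ),
        p * (List.ofFn fun j => l (i j)).prod * z = 0) := by
  intro z
  have hτ : IsKrausRepresentation τ l := hKraus
  have hp : p.IsPositive := .of_isStarProjection ⟨hp_idem, hp_sa⟩
  have h_mono : Monotone fun n => τ^[n] p := hτ.monotone.monotone_iterate_of_le_map hp_sub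
  have h_pos n : (τ^[n] p).IsPositive := Function.Iterate.rec _ hp (fun _ => hτ.isPositive_map) n
  rw [mul_eq_zero_iff_of_monotone_tendsto h_pos h_mono hy_lim, ← Nat.and_forall_add_one]
  exact and_congr .rfl (forall_congr' fun n => hτ.iterate_mul_eq_zero_iff hp (n + 1) z)

theorem strong_limit_annihilates_iff_words_annihilate
    {H : Type*} [NormedAddCommGroup H] [InnerProductSpace ℂ H]
    [CompleteSpace H] [TopologicalSpace.SeparableSpace H]
    (τ : (H →L[ℂ] H) → (H →L[ℂ] H)) (l : ℕ → H →L[ℂ] H)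
    (hKraus : ∀ (x : H →L[ℂ] H) (ξ : H),
      HasSum (fun k => star (l k) (x ((l k) ξ))) (τ x ξ))
    (hUnital : ∀ ξ : H, HasSum (fun k => star (l k) ((l k) ξ)) ξ)
    (p : H →L[ℂ] H) (hp_idem : p * p = p) (hp_sa : IsSelfAdjoint p)
    (hp_sub : (τ p - p).IsPositive)
    (y : H →L[ℂ] H) (hy_pos : y.IsPositive) (hy_le : (1 - y).IsPositive)
    (hy_lim : ∀ ξ : H, Filter.Tendsto (fun n => (τ^[n] p) ξ)
      Filter.atTop (nhds (y ξ))) :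
    ∀ z : H →L[ℂ] H, y * z = 0 ↔
      (p * z = 0 ∧ ∀ (n : ℕ) (i : Fin (n + 1) → ℕ),
        p * (List.ofFn fun j => l (i j)).prod * z = 0) :=
  strong_limit_annihilates_iff_words_annihilate_general τ l hKraus p hp_idem hp_sa hp_sub y hy_lim
end

section
/- Suppose H is finite dimensional. Let p be a sub-harmonic projection for τ and let y = lim_{n→∞} τ^n(p). If y is injective, then y = 1 (i.e. every metastable projection is transient in finite dimensions). -/
/-!
The iterates `τⁿ(p)` increase to `y`, so `p ≤ y ≤ 1`, and since `τ` is linear, hence continuous in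
finite dimension, `τ(y) = y`. Let `ε` be the least eigenvalue of `y`. If `ε = 1` then `y = 1`.
Otherwise `y - ε` is a positive fixed point of `τ`, so its kernel, the `ε`-eigenspace `E` of `y`,
is invariant under every Kraus operator `lₖ`. Moreover `E` is orthogonal to the range of `p`, on
which `y` is the identity. Hence the quadratic form of every `τⁿ(p)` vanishes on `E`, so `y` kills
an `ε`-eigenvector, contradicting injectivity.
-/

open scoped InnerProductSpace ComplexOrder
open ContinuousLinearMap Filter Topology

section

variable {H : Type*} [NormedAddCommGroup H] [InnerProductSpace ℂ H]

theorem ContinuousLinearMap.isPositive_of_inner_nonneg_s11 {T : H →L[ℂ] H}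
    (hT : ∀ ξ, 0 ≤ ⟪ξ, T ξ⟫_ℂ) : T.IsPositive := by
  refine (isPositive_iff_complex T).mpr fun ξ => ?_
  have h : 0 ≤ ⟪T ξ, ξ⟫_ℂ := by
    rw [← inner_conj_symm]
    exact star_nonneg_iff.mpr (hT ξ)
  obtain ⟨hre, him⟩ := RCLike.nonneg_iff.mp h
  exact ⟨by simp [RCLike.ext_iff (K := ℂ), him], hre⟩

variable [CompleteSpace H]

theorem ContinuousLinearMap.apply_eq_zero_of_inner_eq_zero {a : H →L[ℂ] H}
    (ha : 0 ≤ a) {ξ : H} (hξ : ⟪ξ, a ξ⟫_ℂ = 0) : a ξ = 0 := by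
  obtain ⟨b, rfl⟩ := CStarAlgebra.nonneg_iff_eq_star_mul_self.mp ha
  have hb : b ξ = 0 := by
    rwa [mul_apply_eq_comp, star_eq_adjoint, adjoint_inner_right, inner_self_eq_zero] at hξ
  simp [hb]

theorem ContinuousLinearMap.apply_eq_zero_of_le {a b : H →L[ℂ] H}
    (ha : 0 ≤ a) (hab : a ≤ b) {ξ : H} (hξ : b ξ = 0) : a ξ = 0 := by
  refine apply_eq_zero_of_inner_eq_zero ha ?_
  have hsum : ⟪ξ, a ξ⟫_ℂ + ⟪ξ, (b - a) ξ⟫_ℂ = 0 := by simp [hξ]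
  exact ((add_eq_zero_iff_of_nonneg (((nonneg_iff_isPositive a).mp ha).inner_nonneg_right ξ)
    (hab.inner_nonneg_right ξ)).mp hsum).1

theorem IsStarProjection.apply_apply_eq_of_le_of_le_one {p y : H →L[ℂ] H}
    (hp : IsStarProjection p) (hpy : p ≤ y) (hy : y ≤ 1) (ξ : H) : y (p ξ) = p ξ := by
  have hpp : p (p ξ) = p ξ := DFunLike.congr_fun hp.isIdempotentElem.eq ξ
  have h : (1 - y) (p ξ) = 0 :=
    apply_eq_zero_of_le (sub_nonneg.mpr hy) (sub_le_sub_left hpy 1) (by simp [hpp])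
  rwa [sub_apply, one_apply_eq_self, sub_eq_zero, eq_comm] at h

theorem IsSelfAdjoint.inner_eq_zero_of_apply_eq_smul {y : H →L[ℂ] H} (hy : IsSelfAdjoint y)
    {u ξ : H} {ε : ℂ} (hu : y u = u) (hξ : y ξ = ε • ξ) (hε : ε ≠ 1) : ⟪u, ξ⟫_ℂ = 0 := by
  have h : (ε - 1) * ⟪u, ξ⟫_ℂ = 0 := by
    rw [sub_mul, one_mul, ← inner_smul_right, ← hξ, ← hy.adjoint_eq, adjoint_inner_right, hu,
      sub_self]
  exact (mul_eq_zero.mp h).resolve_left (sub_ne_zero.mpr hε)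

theorem IsSelfAdjoint.exists_eigenvector_smul_one_le [FiniteDimensional ℂ H] [Nontrivial H]
    {y : H →L[ℂ] H} (hy : IsSelfAdjoint y) :
    ∃ (ε : ℂ) (ξ : H), ξ ≠ 0 ∧ y ξ = ε • ξ ∧ ε • 1 ≤ y := by
  set ε : ℝ := ⨅ ξ : {ξ : H // ξ ≠ 0}, y.rayleighQuotient ξ
  obtain ⟨ξ, hξ⟩ := hy.isSymmetric.hasEigenvalue_iInf_of_finiteDimensional.exists_hasEigenvector
  refine ⟨ε, ξ, hξ.2, hξ.apply_eq_smul, ?_⟩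
  have hbdd : BddBelow (Set.range fun ξ : {ξ : H // ξ ≠ 0} => y.rayleighQuotient ξ) :=
    ⟨-‖y‖, Set.forall_mem_range.mpr fun ξ => (abs_le.mp (y.rayleighQuotient_le_norm ξ)).1⟩
  refine ⟨(hy.sub ?_).isSymmetric, fun η => ?_⟩
  · simp [IsSelfAdjoint, star_smul]
  rcases eq_or_ne η 0 with rfl | hη
  · simp [reApplyInnerSelf_apply]
  have hεη : ε * ‖η‖ ^ 2 ≤ y.reApplyInnerSelf η :=
    (le_div_iff₀ (by positivity)).mp (ciInf_le hbdd ⟨η, hη⟩)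
  simpa [reApplyInnerSelf_apply, inner_sub_left, ← Complex.ofReal_pow] using hεη

def HasKrausForm (τ : (H →L[ℂ] H) → (H →L[ℂ] H)) (l : ℕ → H →L[ℂ] H) : Prop :=
  ∀ (x : H →L[ℂ] H) (ξ : H), HasSum (fun k => star (l k) (x (l k ξ))) (τ x ξ)

namespace HasKrausForm

variable {τ : (H →L[ℂ] H) → (H →L[ℂ] H)} {l : ℕ → H →L[ℂ] H}

theorem hasSum_inner (h : HasKrausForm τ l) (x : H →L[ℂ] H) (ξ η : H) :
    HasSum (fun k => ⟪l k ξ, x (l k η)⟫_ℂ) ⟪ξ, τ x η⟫_ℂ := by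
  simpa [star_eq_adjoint, adjoint_inner_right] using (h x η).mapL (innerSL ℂ ξ)

theorem isLinearMap (h : HasKrausForm τ l) : IsLinearMap ℂ τ where
  map_add a b := ext fun ξ => (h (a + b) ξ).unique (by simpa using (h a ξ).add (h b ξ))
  map_smul c a := ext fun ξ => (h (c • a) ξ).unique (by simpa using (h a ξ).const_smul c)

theorem map_one (h : HasKrausForm τ l) (hU : ∀ ξ, HasSum (fun k => star (l k) (l k ξ)) ξ) :
    τ 1 = 1 :=
  ext fun ξ => (h 1 ξ).unique (by simpa using hU ξ)

theorem map_nonneg (h : HasKrausForm τ l) {x : H →L[ℂ] H} (hx : 0 ≤ x) : 0 ≤ τ x :=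
  (nonneg_iff_isPositive _).mpr <| isPositive_of_inner_nonneg_s11 fun ξ =>
    (h.hasSum_inner x ξ ξ).nonneg fun _ => ((nonneg_iff_isPositive x).mp hx).inner_nonneg_right _

theorem monotone (h : HasKrausForm τ l) : Monotone τ := fun a b hab => by
  simpa [h.isLinearMap.map_sub] using h.map_nonneg (sub_nonneg.mpr hab)

theorem continuous [FiniteDimensional ℂ H] (h : HasKrausForm τ l) : Continuous τ :=
  (h.isLinearMap.mk' τ).continuous_of_finiteDimensional

theorem apply_eq_zero_of_inner_map_eq_zero (h : HasKrausForm τ l) {a : H →L[ℂ] H} (ha : 0 ≤ a)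
    {ξ : H} (hξ : ⟪ξ, τ a ξ⟫_ℂ = 0) (k : ℕ) : a (l k ξ) = 0 := by
  have hterms := (hasSum_zero_iff_of_nonneg fun k =>
    ((nonneg_iff_isPositive a).mp ha).inner_nonneg_right (l k ξ)).mp (hξ ▸ h.hasSum_inner a ξ ξ)
  exact apply_eq_zero_of_inner_eq_zero ha (congrFun hterms k)

theorem apply_eq_smul_of_map_eq (h : HasKrausForm τ l)
    (hU : ∀ ξ, HasSum (fun k => star (l k) (l k ξ)) ξ) {y : H →L[ℂ] H} (hy : τ y = y)
    {ε : ℂ} (hεy : ε • 1 ≤ y) {ξ : H} (hξ : y ξ = ε • ξ) (k : ℕ) : y (l k ξ) = ε • l k ξ := by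
  have hfix : τ (y - ε • 1) = y - ε • 1 := by
    rw [h.isLinearMap.map_sub, h.isLinearMap.map_smul, h.map_one hU, hy]
  have hker : (y - ε • 1) ξ = 0 := by simp [hξ]
  have := h.apply_eq_zero_of_inner_map_eq_zero (sub_nonneg.mpr hεy)
    (by rw [hfix, hker, inner_zero_right]) k
  simpa [sub_eq_zero] using this

theorem inner_iterate_eq_zero (h : HasKrausForm τ l) {S : Set H}
    (hS : ∀ ξ ∈ S, ∀ k, l k ξ ∈ S) {x : H →L[ℂ] H} (hx : ∀ ξ ∈ S, ⟪ξ, x ξ⟫_ℂ = 0) (n : ℕ) :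
    ∀ ξ ∈ S, ⟪ξ, τ^[n] x ξ⟫_ℂ = 0 := by
  induction n with
  | zero => exact hx
  | succ n ih =>
    intro ξ hξ
    rw [Function.iterate_succ_apply']
    exact (h.hasSum_inner _ ξ ξ).unique (by simp [ih _ (hS ξ hξ _)])

end HasKrausForm

end

theorem finiteDim_metastable_is_transient
    {H : Type*} [NormedAddCommGroup H] [InnerProductSpace ℂ H]
    [FiniteDimensional ℂ H]
    (τ : (H →L[ℂ] H) → (H →L[ℂ] H)) (l : ℕ → H →L[ℂ] H)
    (hKraus : ∀ (x : H →L[ℂ] H) (ξ : H),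
      HasSum (fun k => star (l k) (x ((l k) ξ))) (τ x ξ))
    (hUnital : ∀ ξ : H, HasSum (fun k => star (l k) ((l k) ξ)) ξ)
    (p : H →L[ℂ] H) (hp_idem : p * p = p) (hp_sa : IsSelfAdjoint p)
    (hp_sub : (τ p - p).IsPositive)
    (y : H →L[ℂ] H)
    (hy_lim : Filter.Tendsto (fun n => τ^[n] p) Filter.atTop (nhds y))
    (hy_inj : Function.Injective y) :
    y = 1 := by
  rcases subsingleton_or_nontrivial H with _ | _
  · exact Subsingleton.elim _ _
  have hτ : HasKrausForm τ l := hKraus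
  have hp : IsStarProjection p := ⟨hp_idem, hp_sa⟩
  have hpy : p ≤ y := (hτ.monotone.monotone_iterate_of_le_map hp_sub).ge_of_tendsto hy_lim 0
  have hy1 : y ≤ 1 := le_of_tendsto' hy_lim fun n =>
    Function.iterate_fixed (hτ.map_one hUnital) n ▸ hτ.monotone.iterate n hp.le_one
  have hy0 : 0 ≤ y := hp.nonneg.trans hpy
  have hfix : τ y = y := isFixedPt_of_tendsto_iterate hy_lim hτ.continuous.continuousAt
  obtain ⟨ε, ξ, hξ0, hyξ, hεy⟩ := (IsSelfAdjoint.of_nonneg hy0).exists_eigenvector_smul_one_le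
  by_cases hε : ε = 1
  · exact hy1.antisymm (by simpa [hε] using hεy)
  let E : Set H := {η | y η = ε • η}
  have hE : ∀ η ∈ E, ∀ k, l k η ∈ E := fun η hη => hτ.apply_eq_smul_of_map_eq hUnital hfix hεy hη
  have hpE : ∀ η ∈ E, ⟪η, p η⟫_ℂ = 0 := fun η hη => by
    rw [← inner_conj_symm, (IsSelfAdjoint.of_nonneg hy0).inner_eq_zero_of_apply_eq_smul
      (hp.apply_apply_eq_of_le_of_le_one hpy hy1 η) hη hε, map_zero]
  have hlim : Tendsto (fun n => ⟪ξ, τ^[n] p ξ⟫_ℂ) atTop (𝓝 ⟪ξ, y ξ⟫_ℂ) :=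
    tendsto_const_nhds.inner (((apply ℂ H ξ).continuous.tendsto y).comp hy_lim)
  have hyξ0 : y ξ = 0 := apply_eq_zero_of_inner_eq_zero hy0 <| tendsto_nhds_unique hlim <| by
    simp [hτ.inner_iterate_eq_zero hE hpE _ ξ hyξ]
  exact (hξ0 (hy_inj (hyξ0.trans (map_zero y).symm))).elim
end

section
/- Suppose H is finite dimensional. Then there exists a finite family (p_i)_{1≤i≤m} of mutually orthogonal projections, each of which is a minimal sub-harmonic projection for τ, such that the limit y = lim_{n→∞} τ^n(p_1 + ⋯ + p_m) is injective (i.e. 1 − ∑_i p_i is metastable). -/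
/-!
A subspace `K` invariant under every Kraus operator `l k` is the same thing as a sub-harmonic
projection `K.starProjection ≤ τ K.starProjection`, and minimal invariant subspaces give minimal
sub-harmonic projections. For an invariant `U` the iterates `τⁿ (P_U)` increase and stay below `1`,
so in finite dimension they converge to some `y` with `τ y = y` and `P_U ≤ y`. The kernel of such
a `y` is again invariant, because `⟪ξ, τ y ξ⟫ = ∑ ⟪l k ξ, y (l k ξ)⟫` is a sum of non-negative
terms, and it is orthogonal to `U`. Hence, if `y` is not injective, a minimal invariant
subspace of `ker y` can be added to an orthogonal decomposition of `U` into minimal invariant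
subspaces, and a maximal decomposable `U` must have an injective limit.
-/

open Filter Topology RCLike
open scoped ComplexOrder InnerProductSpace

theorem Monotone.exists_tendsto_of_mem_isCompact {ι α : Type*} [Preorder ι] [IsDirectedOrder ι]
    [Nonempty ι] [TopologicalSpace α] [PartialOrder α] [OrderClosedTopology α] {f : ι → α}
    {s : Set α} (hf : Monotone f) (hs : IsCompact s) (hfs : ∀ i, f i ∈ s) :
    ∃ a, Tendsto f atTop (𝓝 a) := by
  have hfs' : ∀ᶠ i in atTop, f i ∈ s := .of_forall hfs
  have upper_bound : ∀ a, MapClusterPt a atTop f → ∀ i, f i ≤ a := fun a ha i =>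
    isClosed_Ici.mem_of_mapClusterPt ha (eventually_atTop.2 ⟨i, fun _ hj => hf hj⟩)
  have le_of_mapClusterPt : ∀ a b, MapClusterPt a atTop f → MapClusterPt b atTop f → a ≤ b :=
    fun a b ha hb => isClosed_Iic.mem_of_mapClusterPt ha (.of_forall (upper_bound b hb))
  obtain ⟨a, -, ha⟩ := hs.exists_mapClusterPt (le_principal_iff.2 hfs')
  exact ⟨a, hs.tendsto_nhds_of_unique_mapClusterPt hfs' fun b _ hb =>
    le_antisymm (le_of_mapClusterPt b a hb ha) (le_of_mapClusterPt a b ha hb)⟩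

namespace ContinuousLinearMap

variable {H : Type*} [NormedAddCommGroup H] [InnerProductSpace ℂ H]

theorem isPositive_of_forall_inner_nonneg {T : H →L[ℂ] H} (h : ∀ x, 0 ≤ ⟪x, T x⟫_ℂ) :
    T.IsPositive := by
  rw [isPositive_iff_complex]
  intro x
  have hreal : (starRingEnd ℂ) ⟪x, T x⟫_ℂ = ⟪x, T x⟫_ℂ := (IsSelfAdjoint.of_nonneg (h x)).star_eq
  rw [← inner_conj_symm, hreal]
  exact ⟨Complex.conj_eq_iff_re.mp hreal, (Complex.nonneg_iff.mp (h x)).1⟩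

variable [CompleteSpace H]

theorem apply_eq_zero_of_inner_eq_zero_s12 {x : H →L[ℂ] H} (hx : 0 ≤ x) {ξ : H}
    (h : ⟪ξ, x ξ⟫_ℂ = 0) : x ξ = 0 := by
  obtain ⟨s, rfl⟩ := CStarAlgebra.nonneg_iff_eq_star_mul_self.mp hx
  have hs : s ξ = 0 := by
    rw [← inner_self_eq_zero (𝕜 := ℂ)]
    simpa [star_eq_adjoint, adjoint_inner_right] using h
  simp [hs]

theorem ker_le_ker_of_le {a b : H →L[ℂ] H} (ha : 0 ≤ a) (hab : a ≤ b) : b.ker ≤ a.ker := by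
  intro ξ (hξ : b ξ = 0)
  have h : ⟪ξ, a ξ⟫_ℂ = -⟪ξ, (b - a) ξ⟫_ℂ := by simp [hξ]
  refine apply_eq_zero_of_inner_eq_zero_s12 ha (le_antisymm ?_ ?_)
  · rw [h, neg_nonpos]
    exact hab.inner_nonneg_right ξ
  · exact ((nonneg_iff_isPositive a).mp ha).inner_nonneg_right ξ

end ContinuousLinearMap

namespace Submodule

variable {𝕜 E : Type*} [RCLike 𝕜] [NormedAddCommGroup E] [InnerProductSpace 𝕜 E]

theorem IsOrtho.starProjection_sup {U W : Submodule 𝕜 E} [U.HasOrthogonalProjection]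
    [W.HasOrthogonalProjection] [(U ⊔ W).HasOrthogonalProjection] (h : U ⟂ W) :
    (U ⊔ W).starProjection = U.starProjection + W.starProjection := by
  ext x
  rw [add_apply]
  refine eq_starProjection_of_mem_orthogonal
    (add_mem (mem_sup_left (U.starProjection_apply_mem x))
      (mem_sup_right (W.starProjection_apply_mem x))) ?_
  rw [← inf_orthogonal]
  refine ⟨?_, ?_⟩
  · rw [sub_add_eq_sub_sub]
    exact sub_mem (U.sub_starProjection_mem_orthogonal x) (h.symm (W.starProjection_apply_mem x))
  · rw [sub_add_eq_sub_sub_swap]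
    exact sub_mem (W.sub_starProjection_mem_orthogonal x) (h (U.starProjection_apply_mem x))

theorem starProjection_biSup_eq_sum [FiniteDimensional 𝕜 E] (S : Finset (Submodule 𝕜 E))
    (hS : (S : Set (Submodule 𝕜 E)).Pairwise (· ⟂ ·)) :
    (⨆ V ∈ S, V).starProjection = ∑ V ∈ S, V.starProjection := by
  classical
  induction S using Finset.induction_on with
  | empty => simp
  | insert W S hW ih =>
    rw [Finset.coe_insert, Set.pairwise_insert_of_symm] at hS
    have hWS : W ⟂ ⨆ V ∈ S, V :=
      isOrtho_iSup_right.2 fun V => isOrtho_iSup_right.2 fun hV => hS.2 V hV (by grind)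
    rw [Finset.iSup_insert, Finset.sum_insert hW, hWS.starProjection_sup, ih hS.1]

theorem starProjection_nonneg [CompleteSpace E] (K : Submodule 𝕜 E) [K.HasOrthogonalProjection] :
    0 ≤ K.starProjection :=
  (ContinuousLinearMap.nonneg_iff_isPositive _).mpr
    (.of_isStarProjection isStarProjection_starProjection)

theorem starProjection_le_one [CompleteSpace E] (K : Submodule 𝕜 E) [K.HasOrthogonalProjection] :
    K.starProjection ≤ 1 := by
  rw [← starProjection_top']
  exact starProjection_le_starProjection_iff.mpr le_top

theorem re_inner_starProjection_self (K : Submodule 𝕜 E) [K.HasOrthogonalProjection] (v : E) :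
    re ⟪v, K.starProjection v⟫_𝕜 = ‖K.starProjection v‖ ^ 2 := by
  rw [inner_re_symm, K.re_inner_starProjection_eq_normSq, K.starProjection_apply, coe_norm]

end Submodule

section Kraus

variable {H : Type*} [NormedAddCommGroup H] [InnerProductSpace ℂ H]

def IsKrausInvariant (l : ℕ → H →L[ℂ] H) (K : Submodule ℂ H) : Prop :=
  ∀ k, ∀ v ∈ K, l k v ∈ K

theorem IsKrausInvariant.iSup {l : ℕ → H →L[ℂ] H} {ι : Sort*} {V : ι → Submodule ℂ H}
    (hV : ∀ i, IsKrausInvariant l (V i)) : IsKrausInvariant l (⨆ i, V i) := fun k _ hv =>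
  Submodule.iSup_induction V (motive := fun v => l k v ∈ ⨆ i, V i) hv
    (fun i w hw => Submodule.mem_iSup_of_mem i (hV i k w hw)) (by simp)
    (fun v w hv hw => by simpa only [map_add] using add_mem hv hw)

def IsMinimalKrausInvariant (l : ℕ → H →L[ℂ] H) (K : Submodule ℂ H) : Prop :=
  Minimal (fun W => W ≠ ⊥ ∧ IsKrausInvariant l W) K

structure IsMinimalKrausDecomposition (l : ℕ → H →L[ℂ] H) (S : Finset (Submodule ℂ H))
    (U : Submodule ℂ H) : Prop where
  isMinimalKrausInvariant : ∀ V ∈ S, IsMinimalKrausInvariant l V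
  pairwise_isOrtho : (S : Set (Submodule ℂ H)).Pairwise (· ⟂ ·)
  iSup_eq : ⨆ V ∈ S, V = U

namespace IsMinimalKrausDecomposition

variable {l : ℕ → H →L[ℂ] H} {S : Finset (Submodule ℂ H)} {U : Submodule ℂ H}

theorem isKrausInvariant (hS : IsMinimalKrausDecomposition l S U) : IsKrausInvariant l U :=
  hS.iSup_eq ▸ IsKrausInvariant.iSup fun V =>
    IsKrausInvariant.iSup fun hV => (hS.isMinimalKrausInvariant V hV).1.2

theorem le_of_mem (hS : IsMinimalKrausDecomposition l S U) {V : Submodule ℂ H} (hV : V ∈ S) :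
    V ≤ U :=
  hS.iSup_eq ▸ le_iSup₂ (f := fun V (_ : V ∈ S) => V) V hV

theorem sum_starProjection [FiniteDimensional ℂ H] (hS : IsMinimalKrausDecomposition l S U) :
    ∑ V ∈ S, V.starProjection = U.starProjection := by
  rw [← hS.iSup_eq, Submodule.starProjection_biSup_eq_sum S hS.pairwise_isOrtho]

theorem insert [DecidableEq (Submodule ℂ H)] (hS : IsMinimalKrausDecomposition l S U)
    {W : Submodule ℂ H} (hW : IsMinimalKrausInvariant l W) (hWU : W ⟂ U) :
    IsMinimalKrausDecomposition l (insert W S) (W ⊔ U) where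
  isMinimalKrausInvariant := Finset.forall_mem_insert _ _ _ |>.mpr ⟨hW, hS.isMinimalKrausInvariant⟩
  pairwise_isOrtho := by
    rw [Finset.coe_insert, Set.pairwise_insert_of_symm]
    exact ⟨hS.pairwise_isOrtho, fun V hV _ => hWU.mono_right (hS.le_of_mem hV)⟩
  iSup_eq := by rw [Finset.iSup_insert, hS.iSup_eq]

end IsMinimalKrausDecomposition

variable [CompleteSpace H]

structure IsUnitalKrausMap (τ : (H →L[ℂ] H) → H →L[ℂ] H) (l : ℕ → H →L[ℂ] H) : Prop where
  hasSum_apply (x : H →L[ℂ] H) (ξ : H) : HasSum (fun k => star (l k) (x (l k ξ))) (τ x ξ)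
  hasSum_star_mul_self_apply (ξ : H) : HasSum (fun k => star (l k) (l k ξ)) ξ

namespace IsUnitalKrausMap

variable {τ : (H →L[ℂ] H) → H →L[ℂ] H} {l : ℕ → H →L[ℂ] H} (hτ : IsUnitalKrausMap τ l)
include hτ

theorem hasSum_inner (x : H →L[ℂ] H) (ξ η : H) :
    HasSum (fun k => ⟪l k η, x (l k ξ)⟫_ℂ) ⟪η, τ x ξ⟫_ℂ := by
  simpa [ContinuousLinearMap.star_eq_adjoint, ContinuousLinearMap.adjoint_inner_right] using
    (hτ.hasSum_apply x ξ).mapL (innerSL ℂ η)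

theorem map_one : τ 1 = 1 := by
  ext ξ
  simpa using (hτ.hasSum_apply 1 ξ).unique (hτ.hasSum_star_mul_self_apply ξ)

theorem hasSum_norm_sq (ξ : H) : HasSum (fun k => ‖l k ξ‖ ^ 2) (‖ξ‖ ^ 2) := by
  simpa only [hτ.map_one, one_apply_eq_self, RCLike.reCLM_apply, inner_self_eq_norm_sq] using
    (hτ.hasSum_inner 1 ξ ξ).mapL RCLike.reCLM

def toLinearMap : (H →L[ℂ] H) →ₗ[ℂ] H →L[ℂ] H where
  toFun := τ
  map_add' x y := by
    ext ξ
    refine (hτ.hasSum_apply (x + y) ξ).unique ?_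
    simpa using (hτ.hasSum_apply x ξ).add (hτ.hasSum_apply y ξ)
  map_smul' c x := by
    ext ξ
    refine (hτ.hasSum_apply (c • x) ξ).unique ?_
    simpa using (hτ.hasSum_apply x ξ).const_smul c

@[simp]
theorem coe_toLinearMap : ⇑hτ.toLinearMap = τ := rfl

theorem continuous [FiniteDimensional ℂ H] : Continuous τ :=
  hτ.toLinearMap.continuous_of_finiteDimensional

theorem map_nonneg {x : H →L[ℂ] H} (hx : 0 ≤ x) : 0 ≤ τ x := by
  rw [ContinuousLinearMap.nonneg_iff_isPositive] at hx ⊢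
  exact ContinuousLinearMap.isPositive_of_forall_inner_nonneg fun ξ =>
    (hτ.hasSum_inner x ξ ξ).nonneg fun k => hx.inner_nonneg_right _

theorem monotone : Monotone τ := fun x y hxy => by
  rw [← sub_nonneg, ← hτ.coe_toLinearMap, ← map_sub]
  exact hτ.map_nonneg (sub_nonneg.mpr hxy)

theorem apply_eq_zero_of_map_apply_eq_zero {x : H →L[ℂ] H} (hx : 0 ≤ x) {ξ : H}
    (h : τ x ξ = 0) (k : ℕ) : x (l k ξ) = 0 := by
  have hsum := hτ.hasSum_inner x ξ ξ
  rw [h, inner_zero_right, hasSum_zero_iff_of_nonneg fun k =>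
    ((ContinuousLinearMap.nonneg_iff_isPositive x).mp hx).inner_nonneg_right _] at hsum
  exact ContinuousLinearMap.apply_eq_zero_of_inner_eq_zero_s12 hx (congrFun hsum k)

theorem isKrausInvariant_ker {y : H →L[ℂ] H} (hy : 0 ≤ y) (hτy : τ y = y) :
    IsKrausInvariant l y.ker := fun k ξ (hξ : y ξ = 0) =>
  hτ.apply_eq_zero_of_map_apply_eq_zero hy (by rw [hτy, hξ]) k

theorem hasSum_norm_sq_starProjection (K : Submodule ℂ H) [K.HasOrthogonalProjection] (ξ : H) :
    HasSum (fun k => ‖K.starProjection (l k ξ)‖ ^ 2) (re ⟪ξ, τ K.starProjection ξ⟫_ℂ) := by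
  simpa only [RCLike.reCLM_apply, K.re_inner_starProjection_self] using
    (hτ.hasSum_inner K.starProjection ξ ξ).mapL RCLike.reCLM

theorem hasSum_norm_sq_starProjection_orthogonal (K : Submodule ℂ H) [K.HasOrthogonalProjection]
    (ξ : H) :
    HasSum (fun k => ‖Kᗮ.starProjection (l k ξ)‖ ^ 2)
      (‖ξ‖ ^ 2 - re ⟪ξ, τ K.starProjection ξ⟫_ℂ) := by
  have hpyth : ∀ v, ‖Kᗮ.starProjection v‖ ^ 2 = ‖v‖ ^ 2 - ‖K.starProjection v‖ ^ 2 := fun v => by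
    linarith [K.norm_sq_eq_add_norm_sq_starProjection v]
  simpa only [hpyth] using (hτ.hasSum_norm_sq ξ).sub (hτ.hasSum_norm_sq_starProjection K ξ)

theorem isKrausInvariant_of_starProjection_le_map (K : Submodule ℂ H)
    [K.HasOrthogonalProjection] (hle : K.starProjection ≤ τ K.starProjection) :
    IsKrausInvariant l K := by
  intro k v hv
  have hform := hle.re_inner_nonneg_right v
  simp only [sub_apply, inner_sub_right, map_sub, K.starProjection_eq_self_iff.mpr hv,
    inner_self_eq_norm_sq] at hform
  have hsum := hτ.hasSum_norm_sq_starProjection_orthogonal K v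
  have hzero : ‖v‖ ^ 2 - re ⟪v, τ K.starProjection v⟫_ℂ = 0 :=
    le_antisymm (by linarith) (hsum.nonneg fun _ => sq_nonneg _)
  rw [hzero, hasSum_zero_iff_of_nonneg fun _ => sq_nonneg _] at hsum
  have hk : Kᗮ.starProjection (l k v) = 0 := by simpa using congrFun hsum k
  rwa [Kᗮ.starProjection_apply_eq_zero_iff, K.orthogonal_orthogonal] at hk

theorem starProjection_le_map_of_isKrausInvariant (K : Submodule ℂ H)
    [K.HasOrthogonalProjection] (hK : IsKrausInvariant l K) :
    K.starProjection ≤ τ K.starProjection := by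
  refine ⟨((ContinuousLinearMap.nonneg_iff_isPositive _).mp
    (hτ.map_nonneg K.starProjection_nonneg)).isSymmetric.sub K.starProjection_isSymmetric,
    fun ξ => ?_⟩
  -- `l k` maps the `K`-component of `ξ` into `K`, so only its `Kᗮ`-component leaves `K`.
  have hterm : ∀ k, ‖Kᗮ.starProjection (l k ξ)‖ ^ 2 ≤ ‖l k (Kᗮ.starProjection ξ)‖ ^ 2 := by
    intro k
    have hPξ : Kᗮ.starProjection (l k (K.starProjection ξ)) = 0 :=
      Kᗮ.starProjection_apply_eq_zero_iff.mpr
        (K.le_orthogonal_orthogonal (hK k _ (K.starProjection_apply_mem ξ)))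
    conv_lhs => rw [← K.starProjection_add_starProjection_orthogonal ξ, map_add, map_add, hPξ,
      zero_add]
    exact pow_le_pow_left₀ (norm_nonneg _) (Kᗮ.norm_starProjection_apply_le _) 2
  have hle := hasSum_le hterm (hτ.hasSum_norm_sq_starProjection_orthogonal K ξ)
    (hτ.hasSum_norm_sq (Kᗮ.starProjection ξ))
  rw [ContinuousLinearMap.reApplyInnerSelf_apply, inner_re_symm, sub_apply, inner_sub_right,
    map_sub, K.re_inner_starProjection_self]
  linarith [K.norm_sq_eq_add_norm_sq_starProjection ξ]

theorem eq_starProjection_of_le {V : Submodule ℂ H} [V.HasOrthogonalProjection]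
    (hV : IsMinimalKrausInvariant l V) {q : H →L[ℂ] H} (hq : IsStarProjection q) (hq0 : q ≠ 0)
    (hqτ : q ≤ τ q) (hqV : q ≤ V.starProjection) : q = V.starProjection := by
  obtain ⟨K, _, rfl⟩ := isStarProjection_iff_eq_starProjection.mp hq
  rw [Submodule.starProjection_le_starProjection_iff] at hqV
  have hK0 : K ≠ ⊥ := by
    rintro rfl
    exact hq0 Submodule.starProjection_bot
  rw [Submodule.starProjection_inj]
  exact le_antisymm hqV (hV.2 ⟨hK0, hτ.isKrausInvariant_of_starProjection_le_map K hqτ⟩ hqV)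

theorem exists_tendsto_iterate_starProjection [FiniteDimensional ℂ H] {K : Submodule ℂ H}
    (hK : IsKrausInvariant l K) :
    ∃ y, Tendsto (fun n => τ^[n] K.starProjection) atTop (𝓝 y) ∧ K.starProjection ≤ y ∧
      τ y = y := by
  have hmono : Monotone fun n => τ^[n] K.starProjection :=
    hτ.monotone.monotone_iterate_of_le_map (hτ.starProjection_le_map_of_isKrausInvariant K hK)
  have hbound : ∀ n, τ^[n] K.starProjection ∈ Metric.closedBall 0 ‖(1 : H →L[ℂ] H)‖ := by
    intro n
    rw [mem_closedBall_zero_iff]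
    refine CStarAlgebra.norm_le_norm_of_nonneg_of_le
      (K.starProjection_nonneg.trans (hmono (Nat.zero_le n))) ?_
    simpa [Function.iterate_fixed hτ.map_one] using hτ.monotone.iterate n K.starProjection_le_one
  obtain ⟨y, hy⟩ := hmono.exists_tendsto_of_mem_isCompact (isCompact_closedBall _ _) hbound
  have hτy : Tendsto (fun n => τ^[n + 1] K.starProjection) atTop (𝓝 (τ y)) := by
    simpa only [Function.iterate_succ_apply', Function.comp_def] using
      (hτ.continuous.tendsto y).comp hy
  exact ⟨y, hy, hmono.ge_of_tendsto hy 0,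
    tendsto_nhds_unique hτy (hy.comp (tendsto_add_atTop_nat 1))⟩

theorem exists_minimalKrausDecomposition_injective_limit [FiniteDimensional ℂ H] :
    ∃ S U, IsMinimalKrausDecomposition l S U ∧
      ∃ y, Tendsto (fun n => τ^[n] U.starProjection) atTop (𝓝 y) ∧ Function.Injective y := by
  classical
  obtain ⟨U, ⟨S, hS⟩, hmax⟩ := exists_maximal_of_wellFoundedGT
    (fun U => ∃ S, IsMinimalKrausDecomposition l S U) ⟨⊥, ∅, by simp, by simp, by simp⟩
  obtain ⟨y, hy, hUy, hτy⟩ := hτ.exists_tendsto_iterate_starProjection hS.isKrausInvariant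
  refine ⟨S, U, hS, y, hy, ?_⟩
  by_contra hinj
  obtain ⟨W, hWy, hW⟩ := exists_minimal_le_of_wellFoundedLT
    (fun W => W ≠ ⊥ ∧ IsKrausInvariant l W) y.ker
    ⟨by rwa [Ne, LinearMap.ker_eq_bot],
      hτ.isKrausInvariant_ker (U.starProjection_nonneg.trans hUy) hτy⟩
  have hWU : W ⟂ U := hWy.trans <|
    (ContinuousLinearMap.ker_le_ker_of_le U.starProjection_nonneg hUy).trans U.ker_starProjection.le
  have hWU_le : W ≤ U := le_sup_left.trans (hmax ⟨_, hS.insert hW hWU⟩ le_sup_right)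
  exact hW.1.1 (Submodule.isOrtho_self.mp (hWU.mono_right hWU_le))

end IsUnitalKrausMap

end Kraus

theorem finiteDim_resolution_into_recurrent_and_metastable
    {H : Type*} [NormedAddCommGroup H] [InnerProductSpace ℂ H]
    [FiniteDimensional ℂ H]
    (τ : (H →L[ℂ] H) → (H →L[ℂ] H)) (l : ℕ → H →L[ℂ] H)
    (hKraus : ∀ (x : H →L[ℂ] H) (ξ : H),
      HasSum (fun k => star (l k) (x ((l k) ξ))) (τ x ξ))
    (hUnital : ∀ ξ : H, HasSum (fun k => star (l k) ((l k) ξ)) ξ) :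
    ∃ (m : ℕ) (p : Fin m → (H →L[ℂ] H)),
      (∀ i, p i * p i = p i ∧ IsSelfAdjoint (p i)) ∧
      -- each p i is a non-zero sub-harmonic projection
      (∀ i, p i ≠ 0 ∧ (τ (p i) - p i).IsPositive) ∧
      -- each p i is minimal sub-harmonic (recurrent)
      (∀ i, ¬ ∃ q : H →L[ℂ] H, q * q = q ∧ IsSelfAdjoint q ∧
        (τ q - q).IsPositive ∧ q ≠ 0 ∧ q ≠ p i ∧ (p i - q).IsPositive) ∧
      -- mutual orthogonality
      (∀ i j, i ≠ j → p i * p j = 0) ∧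
      -- 1 − ∑ p_i is metastable: the limit of τ^n(∑ p_i) is injective
      (∃ y : H →L[ℂ] H,
        Filter.Tendsto (fun n => τ^[n] (∑ i, p i)) Filter.atTop (nhds y) ∧
        Function.Injective y) := by
  have hτ : IsUnitalKrausMap τ l := ⟨hKraus, hUnital⟩
  obtain ⟨S, U, hS, y, hy, hinj⟩ := hτ.exists_minimalKrausDecomposition_injective_limit
  let V : Fin S.card → S := S.equivFin.symm
  have hmin (i : Fin S.card) := hS.isMinimalKrausInvariant _ (V i).2
  have hsum : ∑ i, (V i).1.starProjection = U.starProjection := by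
    rw [S.equivFin.symm.sum_comp (fun W : S => W.1.starProjection), ← hS.sum_starProjection]
    exact S.sum_coe_sort fun W => W.starProjection
  refine ⟨S.card, fun i => (V i).1.starProjection,
    fun i => ⟨(V i).1.isIdempotentElem_starProjection, isSelfAdjoint_starProjection _⟩,
    fun i => ⟨?_, hτ.starProjection_le_map_of_isKrausInvariant _ (hmin i).1.2⟩, ?_, ?_,
    y, hsum ▸ hy, hinj⟩
  · rw [Ne, ← Submodule.starProjection_bot, Submodule.starProjection_inj]
    exact (hmin i).1.1
  · rintro i ⟨q, hq, hqsa, hqτ, hq0, hne, hle⟩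
    exact hne (hτ.eq_starProjection_of_le (hmin i) ⟨hq, hqsa⟩ hq0 hqτ hle)
  · intro i j hij
    have hVij : (V i).1 ≠ (V j).1 := by simpa [V, Subtype.ext_iff] using hij
    exact (hS.pairwise_isOrtho (V i).2 (V j).2 hVij).starProjection_comp_starProjection
end

section
/- Let p be a sub-harmonic projection for (τ_t = exp(tL))_{t≥0} and let y be the strong limit of τ_t(p) as t → ∞. Setting L_0 = Y, for any z ∈ B(H) the following are equivalent: (a) y·z = 0; (b) p·z = 0 and p·L_{i_1}·L_{i_2}·⋯·L_{i_n}·z = 0 for every n ≥ 1 and all indices i_1, …, i_n ∈ {0, 1, 2, …}. -/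
/-!
The strong limit `y` is harmonic, `𝓛 y = 0`: the matrix elements of `τ_t(p)` converge, and so do
those of their derivative `𝓛 (τ_t(p))`, by Banach–Steinhaus and dominated convergence in
`∑ₖ ⟪Lₖ η, τ_t(p) Lₖ ξ⟫`; a convergent function whose derivative converges has derivative tending
to `0`. Pairing `𝓛 y = 0` with a vector `ζ ∈ ker y` leaves `∑ₖ ⟪Lₖ ζ, y Lₖ ζ⟫ = 0`, so `ker y` is
invariant under `Y` and every `Lₖ`, while `p ≤ y` gives `ker y ⊆ ker p`; this is `(a) ⇒ (b)`.
Conversely, the operators `x` with `x W z = 0` for every word `W` in `Y, L₀, L₁, …` form a closed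
subspace invariant under `𝓛`, hence under every `τ_t`; it contains `p` by `(b)`, so `τ_t(p) z = 0`
and in the limit `y z = 0`.
-/

open scoped InnerProductSpace ComplexOrder
open ContinuousLinearMap NormedSpace Filter Topology

theorem eq_zero_of_tendsto_of_hasDerivAt {f φ : ℝ → ℝ} {a b : ℝ}
    (hf : ∀ t, HasDerivAt f (φ t) t) (hfa : Tendsto f atTop (𝓝 a))
    (hφ : Tendsto φ atTop (𝓝 b)) : b = 0 := by
  choose c hc hslope using fun n : ℕ => exists_hasDerivAt_eq_slope f φ (lt_add_one (n : ℝ))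
    (fun t _ => (hf t).continuousAt.continuousWithinAt) (fun t _ => hf t)
  have hc_top : Tendsto c atTop atTop :=
    tendsto_atTop_mono (fun n => (hc n).1.le) tendsto_natCast_atTop_atTop
  have hdiff : Tendsto (fun n : ℕ => f (n + 1) - f n) atTop (𝓝 (a - a)) :=
    (hfa.comp (tendsto_atTop_add_const_right _ 1 tendsto_natCast_atTop_atTop)).sub
      (hfa.comp tendsto_natCast_atTop_atTop)
  refine tendsto_nhds_unique (hφ.comp hc_top) ?_
  simpa [Function.comp_def, hslope] using hdiff

theorem Continuous.exists_forall_norm_le_of_tendsto {F : Type*} [NormedAddCommGroup F]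
    {g : ℝ → F} {a : F} (hg : Continuous g) (hlim : Tendsto g atTop (𝓝 a)) :
    ∃ C, ∀ t, 0 ≤ t → ‖g t‖ ≤ C := by
  obtain ⟨T, hT⟩ := eventually_atTop.1 (hlim.norm.eventually (gt_mem_nhds (lt_add_one ‖a‖)))
  obtain ⟨C, hC⟩ := (isCompact_Icc (a := 0) (b := T)).exists_bound_of_continuousOn hg.continuousOn
  refine ⟨max C (‖a‖ + 1), fun t ht => ?_⟩
  rcases le_total t T with h | h
  · exact (hC t ⟨ht, h⟩).trans (le_max_left _ _)
  · exact (hT t h).le.trans (le_max_right _ _)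

theorem exists_forall_opNorm_le_of_tendsto {𝕜 E F : Type*} [NontriviallyNormedField 𝕜]
    [NormedAddCommGroup E] [NormedSpace 𝕜 E] [CompleteSpace E]
    [NormedAddCommGroup F] [NormedSpace 𝕜 F] {f : ℝ → E →L[𝕜] F} {g : E → F}
    (hf : ∀ ξ, Continuous fun t => f t ξ) (hlim : ∀ ξ, Tendsto (fun t => f t ξ) atTop (𝓝 (g ξ))) :
    ∃ M, ∀ t, 0 ≤ t → ‖f t‖ ≤ M := by
  obtain ⟨M, hM⟩ := banach_steinhaus (g := fun t : Set.Ici (0 : ℝ) => f t) fun ξ =>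
    let ⟨C, hC⟩ := (hf ξ).exists_forall_norm_le_of_tendsto (hlim ξ)
    ⟨C, fun t => hC t t.2⟩
  exact ⟨M, fun t ht => hM ⟨t, ht⟩⟩

theorem hasDerivAt_exp_smul_apply {E : Type*} [NormedAddCommGroup E] [NormedSpace ℂ E]
    [CompleteSpace E] (A : E →L[ℂ] E) (x : E) (t : ℝ) :
    HasDerivAt (fun s : ℝ => exp (s • A) x) (A (exp (t • A) x)) t :=
  ((apply ℂ E x).restrictScalars ℝ).hasFDerivAt.comp_hasDerivAt t
    (hasDerivAt_exp_smul_const' (𝕂 := ℝ) A t)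

theorem exp_apply_mem {𝕜 E : Type*} [RCLike 𝕜] [NormedAddCommGroup E] [NormedSpace 𝕜 E]
    [CompleteSpace E] {A : E →L[𝕜] E} {K : Submodule 𝕜 E} (hK : IsClosed (K : Set E))
    (hA : ∀ x ∈ K, A x ∈ K) {x : E} (hx : x ∈ K) : exp A x ∈ K := by
  have hpow : ∀ n : ℕ, (A ^ n) x ∈ K := by
    intro n
    induction n with
    | zero => simpa using hx
    | succ n ih => rw [pow_succ', mul_apply_eq_comp]; exact hA _ ih
  have hsum : HasSum (fun n : ℕ => ((n.factorial : 𝕜)⁻¹ • A ^ n) x) (exp A x) := by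
    rw [exp_eq_tsum 𝕜]
    exact (expSeries_summable' A).hasSum.mapL (apply 𝕜 E x)
  rw [← hsum.tsum_eq]
  exact tsum_mem hK fun n => K.smul_mem _ (hpow n)

section RCLike

variable {𝕜 H : Type*} [RCLike 𝕜] [NormedAddCommGroup H] [InnerProductSpace 𝕜 H]

theorem ContinuousLinearMap.isPositive_of_tendsto {ι : Type*} {l : Filter ι} [l.NeBot]
    {x : ι → H →L[𝕜] H} {y : H →L[𝕜] H} (hx : ∀ᶠ i in l, (x i).IsPositive)
    (hlim : ∀ ξ, Tendsto (fun i => x i ξ) l (𝓝 (y ξ))) : y.IsPositive := by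
  have hinner : ∀ a b, Tendsto (fun i => ⟪x i a, b⟫_𝕜) l (𝓝 ⟪y a, b⟫_𝕜) :=
    fun a b => (hlim a).inner tendsto_const_nhds
  refine (isPositive_iff y).2 ⟨fun a b => ?_, fun a => ?_⟩
  · refine tendsto_nhds_unique (hinner a b) ?_
    exact (tendsto_const_nhds.inner (hlim b)).congr'
      (hx.mono fun i hi => (hi.isSymmetric a b).symm)
  · exact ge_of_tendsto (hinner a a) (hx.mono fun i hi => hi.inner_nonneg_left a)

theorem tendsto_tsum_inner_apply {β ι : Type*} {l : Filter ι} {L : β → H →L[𝕜] H}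
    (hL : ∀ ξ, Summable fun k => ‖L k ξ‖ ^ 2) {x : ι → H →L[𝕜] H} {y : H →L[𝕜] H} {M : ℝ}
    (hM : ∀ᶠ i in l, ‖x i‖ ≤ M) (hlim : ∀ ξ, Tendsto (fun i => x i ξ) l (𝓝 (y ξ))) (ξ η : H) :
    Tendsto (fun i => ∑' k, ⟪L k η, x i (L k ξ)⟫_𝕜) l (𝓝 (∑' k, ⟪L k η, y (L k ξ)⟫_𝕜)) := by
  have hprod : Summable fun k => ‖L k η‖ * ‖L k ξ‖ :=
    ((hL η).add (hL ξ)).of_nonneg_of_le (fun k => by positivity) fun k => by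
      nlinarith [two_mul_le_add_sq ‖L k η‖ ‖L k ξ‖, norm_nonneg (L k η), norm_nonneg (L k ξ)]
  refine tendsto_tsum_of_dominated_convergence (hprod.mul_left M)
    (fun k => tendsto_const_nhds.inner (hlim (L k ξ))) ?_
  filter_upwards [hM] with i hi k
  calc ‖⟪L k η, x i (L k ξ)⟫_𝕜‖ ≤ ‖L k η‖ * ‖x i (L k ξ)‖ := norm_inner_le_norm _ _
    _ ≤ ‖L k η‖ * (M * ‖L k ξ‖) := by gcongr; exact (x i).le_of_opNorm_le hi _
    _ = M * (‖L k η‖ * ‖L k ξ‖) := by ring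

end RCLike

section Complex

variable {H : Type*} [NormedAddCommGroup H] [InnerProductSpace ℂ H] [CompleteSpace H]

theorem ContinuousLinearMap.IsPositive.apply_eq_zero_of_inner_eq_zero_s16 {y : H →L[ℂ] H}
    (hy : y.IsPositive) {ζ : H} (h : ⟪ζ, y ζ⟫_ℂ = 0) : y ζ = 0 := by
  obtain ⟨s, rfl⟩ := CStarAlgebra.nonneg_iff_eq_star_mul_self.mp ((nonneg_iff_isPositive y).2 hy)
  rw [mul_apply_eq_comp, star_eq_adjoint, adjoint_inner_right, inner_self_eq_zero] at h
  simp [h]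

theorem apply_eq_zero_of_le_of_apply_eq_zero {p y : H →L[ℂ] H} (hp : p.IsPositive) (hpy : p ≤ y)
    {ζ : H} (hζ : y ζ = 0) : p ζ = 0 := by
  refine hp.apply_eq_zero_of_inner_eq_zero_s16 (le_antisymm ?_ (hp.inner_nonneg_right ζ))
  simpa [inner_sub_right, hζ] using ((le_def p y).1 hpy).inner_nonneg_right ζ

end Complex

/-- The extended family of operators: index 0 is `Y`, index `k+1` is `L k`,
so that it enumerates `L_0 = Y, L_1, L_2, …`. -/
def extendedFamily {H : Type*} [NormedAddCommGroup H] [InnerProductSpace ℂ H]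
    (Y : H →L[ℂ] H) (L : ℕ → H →L[ℂ] H) : ℕ → H →L[ℂ] H
  | 0 => Y
  | (k + 1) => L k

theorem List.forall_iff_nil_and_ofFn {α : Type*} {P : List α → Prop} :
    (∀ w, P w) ↔ P [] ∧ ∀ (n : ℕ) (i : Fin (n + 1) → α), P (List.ofFn i) := by
  refine ⟨fun h => ⟨h [], fun n i => h _⟩, fun ⟨hnil, hofFn⟩ w => ?_⟩
  rcases w with _ | ⟨a, w⟩
  · exact hnil
  · simpa using hofFn w.length (a :: w).get

section Lindblad

variable {H : Type*} [NormedAddCommGroup H] [InnerProductSpace ℂ H] [CompleteSpace H]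

def HasLindbladForm (𝓛 : (H →L[ℂ] H) →L[ℂ] (H →L[ℂ] H)) (Y : H →L[ℂ] H)
    (L : ℕ → H →L[ℂ] H) : Prop :=
  ∀ (x : H →L[ℂ] H) (ξ : H),
    HasSum (fun k => star (L k) (x (L k ξ))) (𝓛 x ξ - star Y (x ξ) - x (Y ξ))

namespace HasLindbladForm

variable {𝓛 : (H →L[ℂ] H) →L[ℂ] (H →L[ℂ] H)} {Y : H →L[ℂ] H} {L : ℕ → H →L[ℂ] H}

theorem apply_eq (h : HasLindbladForm 𝓛 Y L) {x : H →L[ℂ] H} {ξ : H}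
    (hx : ∀ k, x (L k ξ) = 0) : 𝓛 x ξ = star Y (x ξ) + x (Y ξ) := by
  have := (h x ξ).unique (by simp only [hx, map_zero]; exact hasSum_zero)
  rwa [sub_sub, sub_eq_zero] at this

theorem hasSum_inner (h : HasLindbladForm 𝓛 Y L) (x : H →L[ℂ] H) (ξ η : H) :
    HasSum (fun k => ⟪L k η, x (L k ξ)⟫_ℂ)
      (⟪η, 𝓛 x ξ⟫_ℂ - ⟪Y η, x ξ⟫_ℂ - ⟪η, x (Y ξ)⟫_ℂ) := by
  simpa only [innerSL_apply_apply, inner_sub_right, star_eq_adjoint, adjoint_inner_right]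
    using (h x ξ).mapL (innerSL ℂ η)

theorem summable_norm_sq (h : HasLindbladForm 𝓛 Y L) (ξ : H) :
    Summable fun k => ‖L k ξ‖ ^ 2 := by
  refine ((h.hasSum_inner 1 ξ ξ).mapL Complex.reCLM).summable.congr fun k => ?_
  simp [norm_sq_eq_re_inner (𝕜 := ℂ)]

theorem tendsto_inner_apply (h : HasLindbladForm 𝓛 Y L) {ι : Type*} {l : Filter ι}
    {x : ι → H →L[ℂ] H} {y : H →L[ℂ] H} {M : ℝ} (hM : ∀ᶠ i in l, ‖x i‖ ≤ M)
    (hlim : ∀ ξ, Tendsto (fun i => x i ξ) l (𝓝 (y ξ))) (ξ η : H) :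
    Tendsto (fun i => ⟪η, 𝓛 (x i) ξ⟫_ℂ) l (𝓝 ⟪η, 𝓛 y ξ⟫_ℂ) := by
  have hsplit : ∀ x : H →L[ℂ] H,
      ⟪η, 𝓛 x ξ⟫_ℂ = ⟪Y η, x ξ⟫_ℂ + ⟪η, x (Y ξ)⟫_ℂ + ∑' k, ⟪L k η, x (L k ξ)⟫_ℂ := fun x => by
    rw [(h.hasSum_inner x ξ η).tsum_eq]; ring
  simp only [hsplit]
  exact ((tendsto_const_nhds.inner (hlim ξ)).add (tendsto_const_nhds.inner (hlim (Y ξ)))).add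
    (tendsto_tsum_inner_apply h.summable_norm_sq hM hlim ξ η)

theorem apply_eq_zero_of_tendsto (h : HasLindbladForm 𝓛 Y L) {p y : H →L[ℂ] H}
    (hlim : ∀ ξ, Tendsto (fun t : ℝ => exp (t • 𝓛) p ξ) atTop (𝓝 (y ξ))) : 𝓛 y = 0 := by
  have horbit := hasDerivAt_exp_smul_apply 𝓛 p
  obtain ⟨M, hM⟩ := exists_forall_opNorm_le_of_tendsto (fun ξ => (apply ℂ H ξ).continuous.comp
    (continuous_iff_continuousAt.2 fun t => (horbit t).continuousAt)) hlim
  have hre : ∀ ξ η, (⟪η, 𝓛 y ξ⟫_ℂ).re = 0 := by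
    intro ξ η
    let ℓ : (H →L[ℂ] H) →L[ℝ] ℝ :=
      Complex.reCLM.comp (((innerSL ℂ η).comp (apply ℂ H ξ)).restrictScalars ℝ)
    refine eq_zero_of_tendsto_of_hasDerivAt (fun t => ℓ.hasFDerivAt.comp_hasDerivAt t (horbit t))
      ((Complex.continuous_re.tendsto _).comp (tendsto_const_nhds.inner (hlim ξ)))
      ((Complex.continuous_re.tendsto _).comp ?_)
    exact h.tendsto_inner_apply ((eventually_ge_atTop 0).mono hM) hlim ξ η
  ext ξ
  exact (re_inner_self_nonpos (𝕜 := ℂ)).1 (hre ξ (𝓛 y ξ)).le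

theorem apply_extendedFamily_eq_zero (h : HasLindbladForm 𝓛 Y L) {y : H →L[ℂ] H}
    (hy : y.IsPositive) (hy0 : 𝓛 y = 0) {ζ : H} (hζ : y ζ = 0) (a : ℕ) :
    y (extendedFamily Y L a ζ) = 0 := by
  have hsum := h.hasSum_inner y ζ ζ
  rw [hy0, zero_apply, hζ, ← hy.inner_left_eq_inner_right, hζ] at hsum
  simp only [inner_zero_right, inner_zero_left, sub_zero] at hsum
  have hL : ∀ k, y (L k ζ) = 0 := fun k => hy.apply_eq_zero_of_inner_eq_zero_s16
    (congrFun ((hasSum_zero_iff_of_nonneg fun k => hy.inner_nonneg_right _).1 hsum) k)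
  rcases a with _ | k
  · simpa [extendedFamily, hy0, hζ] using (h.apply_eq hL).symm
  · exact hL k

end HasLindbladForm

end Lindblad

section Words

variable {H : Type*} [NormedAddCommGroup H] [InnerProductSpace ℂ H]

theorem mapsTo_list_prod_map {ι : Type*} {E : ι → H →L[ℂ] H} {K : Set H}
    (hE : ∀ i, Set.MapsTo (E i) K K) (w : List ι) : Set.MapsTo (w.map E).prod K K := by
  induction w with
  | nil => simpa using Set.mapsTo_id K
  | cons i w ih =>
    intro v hv
    rw [List.map_cons, List.prod_cons, mul_apply_eq_comp]
    exact hE i (ih hv)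

noncomputable def wordAnnihilator (Y : H →L[ℂ] H) (L : ℕ → H →L[ℂ] H) (z : H →L[ℂ] H) :
    Submodule ℂ (H →L[ℂ] H) :=
  ⨅ w : List ℕ, ((mul ℂ (H →L[ℂ] H)).flip ((w.map (extendedFamily Y L)).prod * z)).ker

variable {Y : H →L[ℂ] H} {L : ℕ → H →L[ℂ] H} {z : H →L[ℂ] H}

theorem mem_wordAnnihilator {x : H →L[ℂ] H} :
    x ∈ wordAnnihilator Y L z ↔ ∀ w : List ℕ, x * (w.map (extendedFamily Y L)).prod * z = 0 := by
  simp only [wordAnnihilator, Submodule.mem_iInf, LinearMap.mem_ker, coe_coe, flip_apply,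
    mul_apply', mul_assoc]

theorem isClosed_wordAnnihilator : IsClosed (wordAnnihilator Y L z : Set (H →L[ℂ] H)) := by
  simpa only [wordAnnihilator, Submodule.coe_iInf] using
    isClosed_iInter fun w => ContinuousLinearMap.isClosed_ker _

theorem mem_wordAnnihilator_iff_ofFn {x : H →L[ℂ] H} :
    x ∈ wordAnnihilator Y L z ↔ x * z = 0 ∧ ∀ (n : ℕ) (i : Fin (n + 1) → ℕ),
      x * (List.ofFn fun j => extendedFamily Y L (i j)).prod * z = 0 := by
  rw [mem_wordAnnihilator, List.forall_iff_nil_and_ofFn]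
  simp only [List.map_ofFn, Function.comp_def, List.map_nil, List.prod_nil, mul_one]

variable [CompleteSpace H] {𝓛 : (H →L[ℂ] H) →L[ℂ] (H →L[ℂ] H)}

theorem HasLindbladForm.mapsTo_wordAnnihilator (h : HasLindbladForm 𝓛 Y L) {x : H →L[ℂ] H}
    (hx : x ∈ wordAnnihilator Y L z) : 𝓛 x ∈ wordAnnihilator Y L z := by
  rw [mem_wordAnnihilator] at hx ⊢
  intro w
  ext ξ
  have hzero : ∀ a, x (extendedFamily Y L a ((w.map (extendedFamily Y L)).prod (z ξ))) = 0 :=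
    fun a => by simpa [mul_assoc] using congr($(hx (a :: w)) ξ)
  have hw : x ((w.map (extendedFamily Y L)).prod (z ξ)) = 0 := by simpa using congr($(hx w) ξ)
  have hY : x (Y ((w.map (extendedFamily Y L)).prod (z ξ))) = 0 := hzero 0
  simpa [h.apply_eq fun k => hzero (k + 1), hw] using hY

theorem HasLindbladForm.mem_wordAnnihilator_of_mul_eq_zero (h : HasLindbladForm 𝓛 Y L)
    {p y : H →L[ℂ] H} (hp : p.IsPositive) (hpy : p ≤ y) (hy : y.IsPositive) (hy0 : 𝓛 y = 0)
    (hyz : y * z = 0) : p ∈ wordAnnihilator Y L z := by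
  refine mem_wordAnnihilator.2 fun w => ?_
  ext ξ
  have hker : Set.MapsTo (w.map (extendedFamily Y L)).prod {v | y v = 0} {v | y v = 0} :=
    mapsTo_list_prod_map (fun a _ hv => h.apply_extendedFamily_eq_zero hy hy0 hv a) w
  exact apply_eq_zero_of_le_of_apply_eq_zero hp hpy (hker congr($hyz ξ))

theorem HasLindbladForm.mul_eq_zero_of_mem_wordAnnihilator (h : HasLindbladForm 𝓛 Y L)
    {p y : H →L[ℂ] H} (hlim : ∀ ξ, Tendsto (fun t : ℝ => exp (t • 𝓛) p ξ) atTop (𝓝 (y ξ)))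
    (hp : p ∈ wordAnnihilator Y L z) : y * z = 0 := by
  have horbit : ∀ t : ℝ, exp (t • 𝓛) p * z = 0 := fun t => by
    simpa using mem_wordAnnihilator.1 (exp_apply_mem isClosed_wordAnnihilator
      (fun x hx => Submodule.smul_of_tower_mem _ t (h.mapsTo_wordAnnihilator hx)) hp) []
  ext ξ
  have hzero : Tendsto (fun t : ℝ => exp (t • 𝓛) p (z ξ)) atTop (𝓝 0) :=
    tendsto_const_nhds.congr fun t => congr($(horbit t) ξ).symm
  simpa using tendsto_nhds_unique (hlim (z ξ)) hzero

end Words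

theorem lindblad_strong_limit_annihilates_iff_words_annihilate_general
    {H : Type*} [NormedAddCommGroup H] [InnerProductSpace ℂ H]
    [CompleteSpace H]
    (Y : H →L[ℂ] H) (L : ℕ → H →L[ℂ] H)
    (Φ : (H →L[ℂ] H) →L[ℂ] (H →L[ℂ] H))
    (hΦ : ∀ (x : H →L[ℂ] H) (ξ : H),
      HasSum (fun k => star (L k) (x ((L k) ξ))) (Φ x ξ))
    (𝓛 : (H →L[ℂ] H) →L[ℂ] (H →L[ℂ] H))
    (h𝓛 : ∀ x : H →L[ℂ] H, 𝓛 x = star Y * x + x * Y + Φ x)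
    (τ : ℝ → (H →L[ℂ] H) →L[ℂ] (H →L[ℂ] H))
    (hτ : ∀ t : ℝ, τ t = NormedSpace.exp (t • 𝓛))
    (p : H →L[ℂ] H) (hp_idem : p * p = p) (hp_sa : IsSelfAdjoint p)
    (hp_sub : ∀ t : ℝ, 0 ≤ t → ((τ t) p - p).IsPositive)
    (y : H →L[ℂ] H) (hy_pos : y.IsPositive)
    (hy_lim : ∀ ξ : H, Filter.Tendsto (fun t : ℝ => ((τ t) p) ξ)
      Filter.atTop (nhds (y ξ))) :
    ∀ z : H →L[ℂ] H, y * z = 0 ↔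
      (p * z = 0 ∧ ∀ (n : ℕ) (i : Fin (n + 1) → ℕ),
        p * (List.ofFn fun j => extendedFamily Y L (i j)).prod * z = 0) := by
  have hL : HasLindbladForm 𝓛 Y L := fun x ξ => by
    convert hΦ x ξ using 1
    rw [h𝓛]
    simp only [add_apply, mul_apply_eq_comp]
    abel
  simp only [hτ] at hp_sub hy_lim
  intro z
  have hpy : p ≤ y := isPositive_of_tendsto (eventually_atTop.2 ⟨0, hp_sub⟩)
    fun ξ => (hy_lim ξ).sub tendsto_const_nhds
  rw [← mem_wordAnnihilator_iff_ofFn]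
  exact ⟨hL.mem_wordAnnihilator_of_mul_eq_zero (.of_isStarProjection ⟨hp_idem, hp_sa⟩) hpy hy_pos
    (hL.apply_eq_zero_of_tendsto hy_lim), hL.mul_eq_zero_of_mem_wordAnnihilator hy_lim⟩

theorem lindblad_strong_limit_annihilates_iff_words_annihilate
    {H : Type*} [NormedAddCommGroup H] [InnerProductSpace ℂ H]
    [CompleteSpace H] [TopologicalSpace.SeparableSpace H]
    (Y : H →L[ℂ] H) (L : ℕ → H →L[ℂ] H)
    (hdiss : ∀ ξ : H, HasSum (fun k => star (L k) ((L k) ξ))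
      (-(star Y ξ + Y ξ)))
    (Φ : (H →L[ℂ] H) →L[ℂ] (H →L[ℂ] H))
    (hΦ : ∀ (x : H →L[ℂ] H) (ξ : H),
      HasSum (fun k => star (L k) (x ((L k) ξ))) (Φ x ξ))
    (𝓛 : (H →L[ℂ] H) →L[ℂ] (H →L[ℂ] H))
    (h𝓛 : ∀ x : H →L[ℂ] H, 𝓛 x = star Y * x + x * Y + Φ x)
    (τ : ℝ → (H →L[ℂ] H) →L[ℂ] (H →L[ℂ] H))
    (hτ : ∀ t : ℝ, τ t = NormedSpace.exp (t • 𝓛))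
    (p : H →L[ℂ] H) (hp_idem : p * p = p) (hp_sa : IsSelfAdjoint p)
    (hp_sub : ∀ t : ℝ, 0 ≤ t → ((τ t) p - p).IsPositive)
    (y : H →L[ℂ] H) (hy_pos : y.IsPositive) (hy_le : (1 - y).IsPositive)
    (hy_lim : ∀ ξ : H, Filter.Tendsto (fun t : ℝ => ((τ t) p) ξ)
      Filter.atTop (nhds (y ξ))) :
    ∀ z : H →L[ℂ] H, y * z = 0 ↔
      (p * z = 0 ∧ ∀ (n : ℕ) (i : Fin (n + 1) → ℕ),
        p * (List.ofFn fun j => extendedFamily Y L (i j)).prod * z = 0) :=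
  lindblad_strong_limit_annihilates_iff_words_annihilate_general Y L Φ hΦ 𝓛 h𝓛 τ hτ p hp_idem hp_sa
    hp_sub y hy_pos hy_lim
end
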